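/- arXiv:2210.08851 — 5 statements merged into one kernel-verified Lean document; each statement's English description precedes it below -/
import Mathlib

section
/- Let (E, ℰ) be a measurable space, μ a probability measure on (E, ℰ), and h : E → ℝ a measurable function with ∫ exp(h) dμ < ∞. Then log ∫ exp(h) dμ = sup_m ( ∫ h dm − KL(m, μ) ), where the supremum is over all probability measures m on (E, ℰ) and by convention ∞ − ∞ = −∞. Moreover, if h is bounded from above on the support of μ, the supremum is attained at the Gibbs distribution g defined by dg/dμ(e) = exp(h(e)) / ∫ exp(h) dμ. -/
open MeasureTheory Real ENNReal Classical

/-- Kullback–Leibler divergence of `m` with respect to `μ`, with values in `EReal`: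
it equals `∫ log (dm/dμ) dm` when `m ≪ μ` (and this integral is well defined),
and `+∞` otherwise. -/
noncomputable def KLdiv {E : Type*} [MeasurableSpace E] (m μ : Measure E) : EReal :=
  if m ≪ μ ∧ Integrable (fun e => Real.log ((m.rnDeriv μ e).toReal)) m then
    ((∫ e, Real.log ((m.rnDeriv μ e).toReal) ∂m : ℝ) : EReal)
  else ⊤

/-- The integral `∫ h dm` as an extended real number (`⊤ - ⊤ = ⊥` in `EReal`,
which encodes the convention `∞ - ∞ = -∞`). -/
noncomputable def eIntegral {E : Type*} [MeasurableSpace E] (m : Measure E) (h : E → ℝ) : EReal :=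
  ((∫⁻ e, ENNReal.ofReal (h e) ∂m : ℝ≥0∞) : EReal) - ((∫⁻ e, ENNReal.ofReal (-h e) ∂m : ℝ≥0∞) : EReal)


lemma ereal_coe_toReal {x : ℝ≥0∞} (hx : x ≠ ⊤) : ((x.toReal : ℝ) : EReal) = (x : EReal) := by
  rw [← ENNReal.ofReal_toReal hx, EReal.coe_ennreal_ofReal,
    max_eq_left ENNReal.toReal_nonneg, ENNReal.toReal_ofReal ENNReal.toReal_nonneg]

lemma lint_ne_top {E : Type*} [MeasurableSpace E] {m : Measure E} {h : E → ℝ}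
    (hi : Integrable h m) : ∫⁻ e, ENNReal.ofReal (h e) ∂m ≠ ⊤ := by
  refine ne_top_of_le_ne_top hi.2.ne (lintegral_mono fun e => ?_)
  rw [← ofReal_norm]
  exact ENNReal.ofReal_le_ofReal (le_abs_self _)

lemma eIntegral_eq {E : Type*} [MeasurableSpace E] {m : Measure E} {h : E → ℝ}
    (hi : Integrable h m) :
    eIntegral m h = ((∫ e, h e ∂m : ℝ) : EReal) := by
  have h1 := lint_ne_top hi
  have h2 := lint_ne_top hi.neg
  simp only [Pi.neg_apply] at h2
  rw [eIntegral, integral_eq_lintegral_pos_part_sub_lintegral_neg_part hi, EReal.coe_sub,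
    ereal_coe_toReal h1, ereal_coe_toReal h2]

lemma young_real (s t : ℝ) (ht : 0 ≤ t) :
    max s 0 * t + t + max (-(Real.log t)) 0 * t
      ≤ max (-s) 0 * t + max (Real.log t) 0 * t + Real.exp s := by
  rcases eq_or_lt_of_le ht with rfl | ht'
  · simp [Real.log_zero, (Real.exp_pos s).le]
  · have key : (s - Real.log t + 1) * t ≤ Real.exp s := by
      have h1 := Real.add_one_le_exp (s - Real.log t)
      have h2 : Real.exp (s - Real.log t) = Real.exp s / t := by
        rw [Real.exp_sub, Real.exp_log ht']
      rw [h2] at h1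
      rw [← le_div_iff₀ ht']
      linarith
    have e1 : max s 0 - max (-s) 0 = s := max_zero_sub_eq_self s
    have e2 : max (Real.log t) 0 - max (-(Real.log t)) 0 = Real.log t := max_zero_sub_eq_self _
    nlinarith [key]

lemma ofReal_max (x : ℝ) : ENNReal.ofReal x = ENNReal.ofReal (max x 0) := by
  rcases le_total x 0 with h | h
  · rw [ENNReal.ofReal_eq_zero.2 h, max_eq_right h, ENNReal.ofReal_zero]
  · rw [max_eq_left h]

lemma young_ennreal (s t : ℝ) (ht : 0 ≤ t) :
    ENNReal.ofReal s * ENNReal.ofReal t + ENNReal.ofReal t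
        + ENNReal.ofReal (-(Real.log t)) * ENNReal.ofReal t
      ≤ ENNReal.ofReal (-s) * ENNReal.ofReal t + ENNReal.ofReal (Real.log t) * ENNReal.ofReal t
        + ENNReal.ofReal (Real.exp s) := by
  calc ENNReal.ofReal s * ENNReal.ofReal t + ENNReal.ofReal t
        + ENNReal.ofReal (-(Real.log t)) * ENNReal.ofReal t
      = ENNReal.ofReal (max s 0 * t + t + max (-(Real.log t)) 0 * t) := by
        rw [_root_.ofReal_max s, _root_.ofReal_max (-(Real.log t)),
          ENNReal.ofReal_add (by positivity) (by positivity),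
          ENNReal.ofReal_add (by positivity) ht,
          ENNReal.ofReal_mul (le_max_right _ _), ENNReal.ofReal_mul (le_max_right _ _)]
    _ ≤ ENNReal.ofReal (max (-s) 0 * t + max (Real.log t) 0 * t + Real.exp s) :=
        ENNReal.ofReal_le_ofReal (young_real s t ht)
    _ = _ := by
        rw [_root_.ofReal_max (-s), _root_.ofReal_max (Real.log t),
          ENNReal.ofReal_add (by positivity) (Real.exp_pos s).le,
          ENNReal.ofReal_add (by positivity) (by positivity),
          ENNReal.ofReal_mul (le_max_right _ _), ENNReal.ofReal_mul (le_max_right _ _)]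

lemma young_ennreal' (s t : ℝ) (ht : 0 ≤ t) :
    ENNReal.ofReal t * ENNReal.ofReal s + ENNReal.ofReal t
        + ENNReal.ofReal t * ENNReal.ofReal (-(Real.log t))
      ≤ ENNReal.ofReal t * ENNReal.ofReal (-s) + ENNReal.ofReal t * ENNReal.ofReal (Real.log t)
        + ENNReal.ofReal (Real.exp s) := by
  simpa [mul_comm] using young_ennreal s t ht

lemma ofReal_abs_le (x : ℝ) : ENNReal.ofReal |x| ≤ ENNReal.ofReal x + ENNReal.ofReal (-x) := by
  rcases le_total 0 x with hx | hx
  · rw [abs_of_nonneg hx]; exact self_le_add_right _ _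
  · rw [abs_of_nonpos hx]; exact le_add_self

lemma value_le {E : Type*} [MeasurableSpace E] (μ : Measure E) [IsProbabilityMeasure μ]
    {h : E → ℝ} (hmeas : Measurable h) (hint : Integrable (fun e => Real.exp (h e)) μ)
    (m : Measure E) [IsProbabilityMeasure m] :
    eIntegral m h - KLdiv m μ ≤ ((Real.log (∫ e, Real.exp (h e) ∂μ) : ℝ) : EReal) := by
  by_cases hcond : m ≪ μ ∧ Integrable (fun e => Real.log ((m.rnDeriv μ e).toReal)) m
  case neg => rw [KLdiv, if_neg hcond, EReal.sub_top]; exact bot_le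
  obtain ⟨hac, hL⟩ := hcond
  have hZ : 0 < ∫ e, Real.exp (h e) ∂μ := integral_exp_pos hint
  set Z : ℝ := ∫ e, Real.exp (h e) ∂μ with hZdef
  -- measurability facts
  have hrmeas : Measurable (m.rnDeriv μ) := Measure.measurable_rnDeriv m μ
  have hLmeas : Measurable (fun e => Real.log ((m.rnDeriv μ e).toReal)) :=
    Real.measurable_log.comp hrmeas.ennreal_toReal
  have hφmeas : Measurable (fun e => h e - Real.log Z) := hmeas.sub measurable_const
  have m1 : Measurable (fun e => ENNReal.ofReal (h e - Real.log Z)) := hφmeas.ennreal_ofReal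
  have m2 : Measurable (fun e => ENNReal.ofReal (-(h e - Real.log Z))) := hφmeas.neg.ennreal_ofReal
  have m3 : Measurable (fun e => ENNReal.ofReal (Real.log ((m.rnDeriv μ e).toReal))) :=
    hLmeas.ennreal_ofReal
  have m4 : Measurable (fun e => ENNReal.ofReal (-(Real.log ((m.rnDeriv μ e).toReal)))) :=
    hLmeas.neg.ennreal_ofReal
  have hp : (∫⁻ e, ENNReal.ofReal (Real.log ((m.rnDeriv μ e).toReal)) ∂m) ≠ ⊤ := lint_ne_top hL
  have hq : (∫⁻ e, ENNReal.ofReal (-(Real.log ((m.rnDeriv μ e).toReal))) ∂m) ≠ ⊤ := by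
    have := lint_ne_top hL.neg
    simpa using this
  -- pointwise Young inequality
  have h1 : ∀ᵐ e ∂μ,
      m.rnDeriv μ e * ENNReal.ofReal (h e - Real.log Z) + m.rnDeriv μ e
          + m.rnDeriv μ e * ENNReal.ofReal (-(Real.log ((m.rnDeriv μ e).toReal)))
        ≤ m.rnDeriv μ e * ENNReal.ofReal (-(h e - Real.log Z))
          + m.rnDeriv μ e * ENNReal.ofReal (Real.log ((m.rnDeriv μ e).toReal))
          + ENNReal.ofReal (Real.exp (h e - Real.log Z)) := by
    filter_upwards [Measure.rnDeriv_lt_top m μ] with e he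
    set t : ℝ := ((m.rnDeriv μ e).toReal) with htdef
    rw [show m.rnDeriv μ e = ENNReal.ofReal t from (ENNReal.ofReal_toReal he.ne).symm]
    exact young_ennreal' _ t ENNReal.toReal_nonneg
  -- integrate
  have key0 := lintegral_mono_ae h1
  rw [lintegral_add_left (f := fun e =>
      m.rnDeriv μ e * ENNReal.ofReal (h e - Real.log Z) + m.rnDeriv μ e)
      ((hrmeas.mul m1).add hrmeas),
    lintegral_add_left (f := fun e =>
      m.rnDeriv μ e * ENNReal.ofReal (h e - Real.log Z)) (hrmeas.mul m1),
    lintegral_add_left (f := fun e =>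
      m.rnDeriv μ e * ENNReal.ofReal (-(h e - Real.log Z))
        + m.rnDeriv μ e * ENNReal.ofReal (Real.log ((m.rnDeriv μ e).toReal)))
      ((hrmeas.mul m2).add (hrmeas.mul m3)),
    lintegral_add_left (f := fun e =>
      m.rnDeriv μ e * ENNReal.ofReal (-(h e - Real.log Z))) (hrmeas.mul m2)] at key0
  rw [lintegral_rnDeriv_mul hac m1.aemeasurable,
    lintegral_rnDeriv_mul hac m2.aemeasurable,
    lintegral_rnDeriv_mul hac m3.aemeasurable,
    lintegral_rnDeriv_mul hac m4.aemeasurable,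
    Measure.lintegral_rnDeriv hac, measure_univ] at key0
  have hexp1 : (∫⁻ e, ENNReal.ofReal (Real.exp (h e - Real.log Z)) ∂μ) = 1 := by
    have hinte : Integrable (fun e => Real.exp (h e - Real.log Z)) μ := by
      simp_rw [Real.exp_sub, Real.exp_log hZ]
      exact hint.div_const Z
    rw [← ofReal_integral_eq_lintegral_ofReal hinte
      (Filter.Eventually.of_forall fun e => (Real.exp_pos _).le)]
    simp_rw [Real.exp_sub, Real.exp_log hZ]
    rw [integral_div, div_self hZ.ne', ENNReal.ofReal_one]
  rw [hexp1] at key0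
  -- key0 : a + 1 + q ≤ b + p + 1
  by_cases hB : (∫⁻ e, ENNReal.ofReal (-h e) ∂m) = ⊤
  · rw [eIntegral, hB, EReal.coe_ennreal_top, EReal.sub_top, EReal.bot_sub]
    exact bot_le
  have hb : (∫⁻ e, ENNReal.ofReal (-(h e - Real.log Z)) ∂m) ≠ ⊤ := by
    have hle : (∫⁻ e, ENNReal.ofReal (-(h e - Real.log Z)) ∂m)
        ≤ (∫⁻ e, ENNReal.ofReal (-h e) ∂m) + ENNReal.ofReal |Real.log Z| := by
      calc (∫⁻ e, ENNReal.ofReal (-(h e - Real.log Z)) ∂m)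
          ≤ ∫⁻ e, (ENNReal.ofReal (-h e) + ENNReal.ofReal |Real.log Z|) ∂m := by
            refine lintegral_mono fun e => ?_
            have he : -(h e - Real.log Z) = -h e + Real.log Z := by ring
            rw [he]
            exact le_trans ENNReal.ofReal_add_le
              (add_le_add_right (ENNReal.ofReal_le_ofReal (le_abs_self _)) _)
        _ = _ := by
            rw [lintegral_add_right _ measurable_const, lintegral_const, measure_univ, mul_one]
    exact ne_top_of_le_ne_top (ENNReal.add_ne_top.2 ⟨hB, ENNReal.ofReal_ne_top⟩) hle
  have hsum : (∫⁻ e, ENNReal.ofReal (-(h e - Real.log Z)) ∂m)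
      + (∫⁻ e, ENNReal.ofReal (Real.log ((m.rnDeriv μ e).toReal)) ∂m) + 1 ≠ ⊤ :=
    ENNReal.add_ne_top.2 ⟨ENNReal.add_ne_top.2 ⟨hb, hp⟩, ENNReal.one_ne_top⟩
  have ha : (∫⁻ e, ENNReal.ofReal (h e - Real.log Z) ∂m) ≠ ⊤ :=
    ne_top_of_le_ne_top hsum ((le_self_add.trans le_self_add).trans key0)
  have hA : (∫⁻ e, ENNReal.ofReal (h e) ∂m) ≠ ⊤ := by
    have hle : (∫⁻ e, ENNReal.ofReal (h e) ∂m)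
        ≤ (∫⁻ e, ENNReal.ofReal (h e - Real.log Z) ∂m) + ENNReal.ofReal |Real.log Z| := by
      calc (∫⁻ e, ENNReal.ofReal (h e) ∂m)
          ≤ ∫⁻ e, (ENNReal.ofReal (h e - Real.log Z) + ENNReal.ofReal |Real.log Z|) ∂m := by
            refine lintegral_mono fun e => ?_
            have he : h e = (h e - Real.log Z) + Real.log Z := by ring
            nth_rewrite 1 [he]
            exact le_trans ENNReal.ofReal_add_le
              (add_le_add_right (ENNReal.ofReal_le_ofReal (le_abs_self _)) _)
        _ = _ := by
            rw [lintegral_add_right _ measurable_const, lintegral_const, measure_univ, mul_one]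
    exact ne_top_of_le_ne_top (ENNReal.add_ne_top.2 ⟨ha, ENNReal.ofReal_ne_top⟩) hle
  have hinth : Integrable h m := by
    refine ⟨hmeas.aestronglyMeasurable, ?_⟩
    rw [hasFiniteIntegral_iff_norm]
    calc (∫⁻ e, ENNReal.ofReal ‖h e‖ ∂m)
        ≤ ∫⁻ e, (ENNReal.ofReal (h e) + ENNReal.ofReal (-h e)) ∂m := by
          refine lintegral_mono fun e => ?_
          rw [Real.norm_eq_abs]
          exact ofReal_abs_le _
      _ = (∫⁻ e, ENNReal.ofReal (h e) ∂m) + (∫⁻ e, ENNReal.ofReal (-h e) ∂m) :=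
          lintegral_add_left hmeas.ennreal_ofReal _
      _ < ⊤ := ENNReal.add_lt_top.2 ⟨lt_top_iff_ne_top.2 hA, lt_top_iff_ne_top.2 hB⟩
  have hφint : Integrable (fun e => h e - Real.log Z) m := hinth.sub (integrable_const _)
  have iφ := integral_eq_lintegral_pos_part_sub_lintegral_neg_part hφint
  have iL := integral_eq_lintegral_pos_part_sub_lintegral_neg_part hL
  have tineq := ENNReal.toReal_mono hsum key0
  rw [ENNReal.toReal_add (ENNReal.add_ne_top.2 ⟨ha, ENNReal.one_ne_top⟩) hq,
    ENNReal.toReal_add ha ENNReal.one_ne_top,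
    ENNReal.toReal_add (ENNReal.add_ne_top.2 ⟨hb, hp⟩) ENNReal.one_ne_top,
    ENNReal.toReal_add hb hp, ENNReal.toReal_one] at tineq
  have iφ2 : ∫ e, (h e - Real.log Z) ∂m = (∫ e, h e ∂m) - Real.log Z := by
    rw [integral_sub hinth (integrable_const _), integral_const, probReal_univ]
    simp
  rw [KLdiv, if_pos ⟨hac, hL⟩, eIntegral_eq hinth, ← EReal.coe_sub, EReal.coe_le_coe_iff]
  have := iφ2 ▸ iφ
  linarith

lemma eIntegral_mono {E : Type*} [MeasurableSpace E] {m : Measure E} {h₁ h₂ : E → ℝ}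
    (hle : ∀ e, h₁ e ≤ h₂ e) : eIntegral m h₁ ≤ eIntegral m h₂ := by
  rw [eIntegral, eIntegral]
  refine EReal.sub_le_sub ?_ ?_
  · exact EReal.coe_ennreal_le_coe_ennreal_iff.2
      (lintegral_mono fun e => ENNReal.ofReal_le_ofReal (hle e))
  · exact EReal.coe_ennreal_le_coe_ennreal_iff.2
      (lintegral_mono fun e => ENNReal.ofReal_le_ofReal (neg_le_neg (hle e)))

lemma gibbs_integrable {E : Type*} [MeasurableSpace E] (μ : Measure E) [IsProbabilityMeasure μ]
    {h : E → ℝ} (hmeas : Measurable h) (hint : Integrable (fun e => Real.exp (h e)) μ)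
    {c : ℝ} (hc : ∀ᵐ e ∂μ, h e ≤ c) : Integrable h (μ.tilted h) := by
  have hZ : 0 < ∫ e, Real.exp (h e) ∂μ := integral_exp_pos hint
  set Z : ℝ := ∫ e, Real.exp (h e) ∂μ with hZdef
  rw [Measure.tilted, integrable_withDensity_iff ((hmeas.exp.div_const _).ennreal_ofReal)
    (Filter.Eventually.of_forall fun e => ENNReal.ofReal_lt_top)]
  set M : ℝ := max (max c 0 * Real.exp c) (Real.exp (-1)) with hMdef
  refine Integrable.mono' (integrable_const (M / Z)) ?_ ?_
  · exact (hmeas.mul ((measurable_ofReal.comp (hmeas.exp.div_const _)).ennreal_toReal)).aestronglyMeasurable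
  · filter_upwards [hc] with e he
    rw [ENNReal.toReal_ofReal (by positivity), Real.norm_eq_abs, abs_mul,
      abs_of_nonneg (by positivity : (0:ℝ) ≤ Real.exp (h e) / Z)]
    rw [div_eq_mul_inv, ← mul_assoc, div_eq_mul_inv]
    have hM : |h e| * Real.exp (h e) ≤ M := by
      rcases le_total 0 (h e) with hs | hs
      · rw [abs_of_nonneg hs]
        refine le_trans ?_ (le_max_left _ _)
        exact mul_le_mul (le_trans he (le_max_left _ _)) (Real.exp_le_exp.2 he)
          (Real.exp_pos _).le (le_max_right _ _)
      · rw [abs_of_nonpos hs]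
        refine le_trans ?_ (le_max_right _ _)
        have k : -h e ≤ Real.exp (-1 - h e) := by
          have := Real.add_one_le_exp (-1 - h e)
          linarith
        calc -h e * Real.exp (h e) ≤ Real.exp (-1 - h e) * Real.exp (h e) :=
              mul_le_mul_of_nonneg_right k (Real.exp_pos _).le
          _ = Real.exp (-1) := by rw [← Real.exp_add]; ring_nf
    exact mul_le_mul_of_nonneg_right hM (by positivity)

lemma gibbs_value {E : Type*} [MeasurableSpace E] (μ : Measure E) [IsProbabilityMeasure μ]
    {h : E → ℝ} (hmeas : Measurable h) (hint : Integrable (fun e => Real.exp (h e)) μ)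
    {c : ℝ} (hc : ∀ᵐ e ∂μ, h e ≤ c) :
    eIntegral (μ.tilted h) h - KLdiv (μ.tilted h) μ
      = ((Real.log (∫ e, Real.exp (h e) ∂μ) : ℝ) : EReal) := by
  haveI : IsProbabilityMeasure (μ.tilted h) := isProbabilityMeasure_tilted hint
  have hac : μ.tilted h ≪ μ := tilted_absolutelyContinuous μ h
  have hih : Integrable h (μ.tilted h) := gibbs_integrable μ hmeas hint hc
  have heq : (fun e => Real.log (((μ.tilted h).rnDeriv μ e).toReal))
      =ᵐ[μ.tilted h] (fun e => h e - Real.log (∫ e', Real.exp (h e') ∂μ)) :=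
    hac.ae_eq (log_rnDeriv_tilted_left_self hint)
  have hInt2 : Integrable (fun e => Real.log (((μ.tilted h).rnDeriv μ e).toReal)) (μ.tilted h) :=
    (hih.sub (integrable_const _)).congr heq.symm
  have hklint : ∫ e, Real.log (((μ.tilted h).rnDeriv μ e).toReal) ∂(μ.tilted h)
      = (∫ e, h e ∂(μ.tilted h)) - Real.log (∫ e', Real.exp (h e') ∂μ) := by
    rw [integral_congr_ae heq, integral_sub hih (integrable_const _), integral_const, probReal_univ]
    simp
  rw [KLdiv, if_pos ⟨hac, hInt2⟩, hklint, eIntegral_eq hih, ← EReal.coe_sub]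
  norm_num

/-- **Donsker–Varadhan variational formula.**
For a probability measure `μ` and a measurable `h : E → ℝ` with `∫ exp h dμ < ∞`,
`log ∫ exp h dμ = sup_m (∫ h dm - KL(m, μ))`, the supremum being over all probability
measures `m` (with the convention `∞ - ∞ = -∞`).  Moreover, if `h` is bounded from above
on the support of `μ`, the supremum is attained at the Gibbs distribution `g` with
`dg/dμ = exp h / ∫ exp h dμ`. -/
theorem donsker_varadhan
    {E : Type*} [MeasurableSpace E] (μ : Measure E) [IsProbabilityMeasure μ]
    (h : E → ℝ) (hmeas : Measurable h)
    (hint : Integrable (fun e => Real.exp (h e)) μ) :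
    ((Real.log (∫ e, Real.exp (h e) ∂μ) : ℝ) : EReal)
      = ⨆ m : {m : Measure E // IsProbabilityMeasure m}, (eIntegral m.1 h - KLdiv m.1 μ)
    ∧ ((∃ c : ℝ, ∀ᵐ e ∂μ, h e ≤ c) →
        (eIntegral
            (μ.withDensity (fun e =>
              ENNReal.ofReal (Real.exp (h e) / ∫ e', Real.exp (h e') ∂μ))) h
          - KLdiv
              (μ.withDensity (fun e =>
                ENNReal.ofReal (Real.exp (h e) / ∫ e', Real.exp (h e') ∂μ))) μ)
          = ((Real.log (∫ e, Real.exp (h e) ∂μ) : ℝ) : EReal)) := by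
  constructor
  · refine le_antisymm ?_ (iSup_le fun m => by haveI := m.2; exact value_le μ hmeas hint m.1)
    have hZ : 0 < ∫ e, Real.exp (h e) ∂μ := integral_exp_pos hint
    -- approximation by truncated functions
    have hmeasn : ∀ n : ℕ, Measurable (fun e => min (h e) (n : ℝ)) :=
      fun n => hmeas.min measurable_const
    have hintn : ∀ n : ℕ, Integrable (fun e => Real.exp (min (h e) (n : ℝ))) μ := by
      intro n
      refine hint.mono' (hmeasn n).exp.aestronglyMeasurable
        (Filter.Eventually.of_forall fun e => ?_)
      rw [Real.norm_eq_abs, abs_of_nonneg (Real.exp_pos _).le]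
      exact Real.exp_le_exp.2 (min_le_left _ _)
    have key : ∀ n : ℕ, ((Real.log (∫ e, Real.exp (min (h e) (n : ℝ)) ∂μ) : ℝ) : EReal)
        ≤ ⨆ m : {m : Measure E // IsProbabilityMeasure m}, (eIntegral m.1 h - KLdiv m.1 μ) := by
      intro n
      haveI : IsProbabilityMeasure (μ.tilted (fun e => min (h e) (n : ℝ))) :=
        isProbabilityMeasure_tilted (hintn n)
      have hv := gibbs_value μ (hmeasn n) (hintn n)
        (Filter.Eventually.of_forall fun e => min_le_right (h e) (n : ℝ))
      rw [← hv]
      refine le_trans (EReal.sub_le_sub (eIntegral_mono fun e => min_le_left _ _) le_rfl) ?_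
      exact le_iSup (fun m : {m : Measure E // IsProbabilityMeasure m} =>
        eIntegral m.1 h - KLdiv m.1 μ) ⟨μ.tilted (fun e => min (h e) (n : ℝ)), inferInstance⟩
    have htend : Filter.Tendsto (fun n : ℕ => ∫ e, Real.exp (min (h e) (n : ℝ)) ∂μ)
        Filter.atTop (nhds (∫ e, Real.exp (h e) ∂μ)) := by
      refine integral_tendsto_of_tendsto_of_monotone hintn hint ?_ ?_
      · refine Filter.Eventually.of_forall fun e => fun a b hab => ?_
        exact Real.exp_le_exp.2 (min_le_min le_rfl (Nat.cast_le.2 hab))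
      · refine Filter.Eventually.of_forall fun e => ?_
        refine tendsto_atTop_of_eventually_const (i₀ := ⌈h e⌉₊) fun n hn => ?_
        rw [min_eq_left (le_trans (Nat.le_ceil (h e)) (Nat.cast_le.2 hn))]
    have hlog : Filter.Tendsto
        (fun n : ℕ => ((Real.log (∫ e, Real.exp (min (h e) (n : ℝ)) ∂μ) : ℝ) : EReal))
        Filter.atTop (nhds ((Real.log (∫ e, Real.exp (h e) ∂μ) : ℝ) : EReal)) :=
      (continuous_coe_real_ereal.tendsto _).comp
        (((Real.continuousAt_log hZ.ne').tendsto).comp htend)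
    exact le_of_tendsto hlog (Filter.Eventually.of_forall key)
  · rintro ⟨c, hc⟩
    exact gibbs_value μ hmeas hint hc
end

section
/- Let f : ℝ → ℝ be measurable with ‖f‖_∞ ≤ C+1 and let B ∈ ℝ^{d×d} be symmetric with ‖B‖_F = 1. Set T = (Y − f*(⟨X,B*⟩))² − (Y − f(⟨X,B⟩))². Then E[T²] ≤ 8((C+1)² + σ²) · ( R(B, f) − R(B*, f*) ). -/
open MeasureTheory Real

/-- The product σ-algebra on real matrices. -/
instance matrixMeasurableSpace {d : ℕ} : MeasurableSpace (Matrix (Fin d) (Fin d) ℝ) :=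
  show MeasurableSpace (Fin d → Fin d → ℝ) from inferInstance

/-- **Second-moment bound for the risk increment.**
In the model `Y = f*(⟨X,B*⟩) + ε` with `E[ε|X] = 0`, under Assumption N
(sub-exponential noise: `E[|ε|^k | X] ≤ (k!/2) σ² L^(k-2)` for all `k ≥ 2`) and
Assumption B (`‖X‖_∞ ≤ 1` a.s., `‖f*‖_∞ ≤ C`, `C ≥ 1`), for any measurable
`f` with `‖f‖_∞ ≤ C+1` and any symmetric `B` with `‖B‖_F = 1`, the variable
`T = (Y - f*(⟨X,B*⟩))² - (Y - f(⟨X,B⟩))²` satisfies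
`E[T²] ≤ 8((C+1)² + σ²) (R(B,f) - R(B*,f*))`. -/
theorem second_moment_bound
    {Ω : Type*} [MeasurableSpace Ω] (P : Measure Ω) [IsProbabilityMeasure P]
    (d : ℕ)
    (X : Ω → Matrix (Fin d) (Fin d) ℝ) (hX : Measurable X)
    (ε : Ω → ℝ) (hε : Measurable ε)
    (Bstar : Matrix (Fin d) (Fin d) ℝ) (hBstar : Bstar.IsSymm)
    (hBstarF : Real.sqrt (∑ i, ∑ j, (Bstar i j) ^ 2) = 1)
    (fstar : ℝ → ℝ) (hfstar : Measurable fstar)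
    (Y : Ω → ℝ) (hY : Y = fun ω => fstar ((X ω * Bstar).trace) + ε ω)
    -- `E[ε | X] = 0`
    (hcond : P[ε | MeasurableSpace.comap X inferInstance] =ᵐ[P] 0)
    -- Assumption N
    (σ L : ℝ) (hσ : 0 < σ) (hL : 0 < L)
    (hNint : ∀ k : ℕ, 2 ≤ k → Integrable (fun ω => |ε ω| ^ k) P)
    (hN : ∀ k : ℕ, 2 ≤ k →
      P[fun ω => |ε ω| ^ k | MeasurableSpace.comap X inferInstance]
        ≤ᵐ[P] fun _ => (k.factorial : ℝ) / 2 * σ ^ 2 * L ^ (k - 2))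
    -- Assumption B
    (C : ℝ) (hC : 1 ≤ C)
    (hXbdd : ∀ᵐ ω ∂P, ∀ i j, |X ω i j| ≤ 1)
    (hfstarBdd : ∀ t, |fstar t| ≤ C)
    -- the pair `(B, f)`
    (B : Matrix (Fin d) (Fin d) ℝ) (hB : B.IsSymm)
    (hBF : Real.sqrt (∑ i, ∑ j, (B i j) ^ 2) = 1)
    (f : ℝ → ℝ) (hf : Measurable f) (hfBdd : ∀ t, |f t| ≤ C + 1) :
    ∫⁻ ω, ENNReal.ofReal
        (((Y ω - fstar ((X ω * Bstar).trace)) ^ 2 - (Y ω - f ((X ω * B).trace)) ^ 2) ^ 2) ∂P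
      ≤ ENNReal.ofReal (8 * ((C + 1) ^ 2 + σ ^ 2) *
          ((∫ ω, (Y ω - f ((X ω * B).trace)) ^ 2 ∂P)
            - ∫ ω, (Y ω - fstar ((X ω * Bstar).trace)) ^ 2 ∂P)) := by
  have hm : MeasurableSpace.comap X inferInstance ≤ (inferInstance : MeasurableSpace Ω) :=
    hX.comap_le
  -- trace maps are measurable
  have htr : ∀ (A : Matrix (Fin d) (Fin d) ℝ),
      Measurable (fun M : Matrix (Fin d) (Fin d) ℝ => (M * A).trace) := by
    intro A
    simp only [Matrix.trace, Matrix.diag, Matrix.mul_apply]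
    exact Finset.measurable_sum _ fun i _ => Finset.measurable_sum _ fun j _ =>
      ((measurable_pi_apply j).comp (measurable_pi_apply i)).mul_const _
  set Δ : Ω → ℝ := fun ω => fstar ((X ω * Bstar).trace) - f ((X ω * B).trace) with hΔ_def
  have hXm : Measurable[MeasurableSpace.comap X inferInstance] X := by
    intro s hs; exact ⟨s, hs, rfl⟩
  have hΔm : Measurable[MeasurableSpace.comap X inferInstance] Δ :=
    ((hfstar.comp (htr Bstar)).comp hXm).sub ((hf.comp (htr B)).comp hXm)
  have hΔmeas : Measurable Δ := hΔm.mono hm le_rfl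
  have hΔbd : ∀ ω, |Δ ω| ≤ 2 * (C + 1) := by
    intro ω
    calc |Δ ω| ≤ |fstar ((X ω * Bstar).trace)| + |f ((X ω * B).trace)| := abs_sub _ _
    _ ≤ C + (C + 1) := add_le_add (hfstarBdd _) (hfBdd _)
    _ ≤ 2 * (C + 1) := by linarith
  -- basic integrabilities
  have hε2 : Integrable (fun ω => ε ω ^ 2) P := by
    have := hNint 2 le_rfl; simpa [sq_abs] using this
  have hε1 : Integrable ε P := by
    refine (hε2.add (integrable_const 1)).mono' hε.aestronglyMeasurable ?_
    filter_upwards with ω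
    have h : |ε ω| ≤ ε ω ^ 2 + 1 := by
      nlinarith [sq_nonneg (|ε ω| - 1), sq_abs (ε ω)]
    simpa using h
  have hΔ2 : Integrable (fun ω => Δ ω ^ 2) P := by
    refine (integrable_const ((2 * (C + 1)) ^ 2)).mono'
      ((hΔmeas.pow_const 2).aestronglyMeasurable) ?_
    filter_upwards with ω
    rw [Real.norm_eq_abs, abs_of_nonneg (sq_nonneg _)]
    have := hΔbd ω
    nlinarith [abs_nonneg (Δ ω), sq_abs (Δ ω)]
  have hεΔ : Integrable (fun ω => Δ ω * ε ω) P :=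
    hε1.bdd_mul (c := 2 * (C + 1)) hΔmeas.aestronglyMeasurable (Filter.Eventually.of_forall fun ω => hΔbd ω)
  have hε2Δ2 : Integrable (fun ω => Δ ω ^ 2 * ε ω ^ 2) P :=
    hε2.bdd_mul (c := (2 * (C + 1)) ^ 2) ((hΔmeas.pow_const 2).aestronglyMeasurable)
      (Filter.Eventually.of_forall fun ω => by
        rw [Real.norm_eq_abs, abs_of_nonneg (sq_nonneg _)]
        have := hΔbd ω; nlinarith [abs_nonneg (Δ ω), sq_abs (Δ ω)])
  -- E[Δ ε] = 0
  have hcross : ∫ ω, Δ ω * ε ω ∂P = 0 := by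
    have h1 : P[fun ω => Δ ω * ε ω | MeasurableSpace.comap X inferInstance] =ᵐ[P] fun ω => Δ ω * (P[ε | MeasurableSpace.comap X inferInstance]) ω :=
      condExp_mul_of_stronglyMeasurable_left hΔm.stronglyMeasurable hεΔ hε1
    have h2 : P[fun ω => Δ ω * ε ω | MeasurableSpace.comap X inferInstance] =ᵐ[P] fun _ => (0 : ℝ) := by
      filter_upwards [h1, hcond] with ω h1 h2
      simp [h1, h2]
    calc ∫ ω, Δ ω * ε ω ∂P = ∫ ω, (P[fun ω => Δ ω * ε ω | MeasurableSpace.comap X inferInstance]) ω ∂P :=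
          (integral_condExp hm).symm
      _ = 0 := by rw [integral_congr_ae h2]; simp
  -- E[Δ² ε²] ≤ σ² E[Δ²]
  have hsecond : ∫ ω, Δ ω ^ 2 * ε ω ^ 2 ∂P ≤ σ ^ 2 * ∫ ω, Δ ω ^ 2 ∂P := by
    have hε2' : (fun ω => ε ω ^ 2) = fun ω => |ε ω| ^ 2 := by
      funext ω; rw [sq_abs]
    have h1 : P[fun ω => Δ ω ^ 2 * ε ω ^ 2 | MeasurableSpace.comap X inferInstance]
        =ᵐ[P] fun ω => Δ ω ^ 2 * (P[fun ω => ε ω ^ 2 | MeasurableSpace.comap X inferInstance]) ω :=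
      condExp_mul_of_stronglyMeasurable_left (hΔm.pow_const 2).stronglyMeasurable hε2Δ2 hε2
    have hN2 : P[fun ω => ε ω ^ 2 | MeasurableSpace.comap X inferInstance] ≤ᵐ[P] fun _ => σ ^ 2 := by
      have := hN 2 le_rfl
      rw [hε2']
      refine this.mono fun ω h => ?_
      simpa [Nat.factorial] using h
    calc ∫ ω, Δ ω ^ 2 * ε ω ^ 2 ∂P
        = ∫ ω, (P[fun ω => Δ ω ^ 2 * ε ω ^ 2 | MeasurableSpace.comap X inferInstance]) ω ∂P := (integral_condExp hm).symm
      _ = ∫ ω, Δ ω ^ 2 * (P[fun ω => ε ω ^ 2 | MeasurableSpace.comap X inferInstance]) ω ∂P := integral_congr_ae h1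
      _ ≤ ∫ ω, Δ ω ^ 2 * σ ^ 2 ∂P := by
          refine integral_mono_ae ?_ (hΔ2.mul_const _) ?_
          · exact (integrable_condExp).bdd_mul (c := (2 * (C + 1)) ^ 2)
              ((hΔmeas.pow_const 2).aestronglyMeasurable)
              (Filter.Eventually.of_forall fun ω => by
                rw [Real.norm_eq_abs, abs_of_nonneg (sq_nonneg _)]
                have := hΔbd ω; nlinarith [abs_nonneg (Δ ω), sq_abs (Δ ω)])
          · filter_upwards [hN2] with ω h
            exact mul_le_mul_of_nonneg_left h (sq_nonneg _)
      _ = σ ^ 2 * ∫ ω, Δ ω ^ 2 ∂P := by rw [integral_mul_const]; ring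
  -- rewrite Y
  have hYg : ∀ ω, Y ω - fstar ((X ω * Bstar).trace) = ε ω := by
    intro ω; rw [hY]; ring
  have hYf : ∀ ω, Y ω - f ((X ω * B).trace) = ε ω + Δ ω := by
    intro ω; rw [hY]; simp only [hΔ_def]; ring
  -- excess risk = E[Δ²]
  have hexcess : (∫ ω, (Y ω - f ((X ω * B).trace)) ^ 2 ∂P)
      - ∫ ω, (Y ω - fstar ((X ω * Bstar).trace)) ^ 2 ∂P = ∫ ω, Δ ω ^ 2 ∂P := by
    have h1 : ∀ ω, (Y ω - f ((X ω * B).trace)) ^ 2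
        = ε ω ^ 2 + (2 * (Δ ω * ε ω) + Δ ω ^ 2) := by
      intro ω; rw [hYf ω]; ring
    have h2 : ∫ ω, (Y ω - f ((X ω * B).trace)) ^ 2 ∂P
        = (∫ ω, ε ω ^ 2 ∂P) + ((2 : ℝ) * ∫ ω, Δ ω * ε ω ∂P + ∫ ω, Δ ω ^ 2 ∂P) := by
      have hsum : Integrable (fun ω => 2 * (Δ ω * ε ω) + Δ ω ^ 2) P :=
        (hεΔ.const_mul 2).add hΔ2
      have hc2 : Integrable (fun ω => 2 * (Δ ω * ε ω)) P := hεΔ.const_mul 2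
      have := integral_congr_ae (μ := P) (Filter.Eventually.of_forall h1)
      rw [this, integral_add hε2 hsum, integral_add hc2 hΔ2, integral_const_mul]
    have h3 : ∫ ω, (Y ω - fstar ((X ω * Bstar).trace)) ^ 2 ∂P = ∫ ω, ε ω ^ 2 ∂P :=
      integral_congr_ae (Filter.Eventually.of_forall fun ω => by simp only [hYg ω])
    rw [h2, h3, hcross]; ring
  -- pointwise bound on T²
  have hptwise : ∀ ω,
      ((Y ω - fstar ((X ω * Bstar).trace)) ^ 2 - (Y ω - f ((X ω * B).trace)) ^ 2) ^ 2
        ≤ 8 * (Δ ω ^ 2 * ε ω ^ 2) + 8 * (C + 1) ^ 2 * Δ ω ^ 2 := by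
    intro ω
    rw [hYg ω, hYf ω]
    have h1 := hΔbd ω
    have h2 : Δ ω ^ 2 ≤ (2 * (C + 1)) ^ 2 := by
      nlinarith [abs_nonneg (Δ ω), sq_abs (Δ ω)]
    nlinarith [sq_nonneg (2 * ε ω * Δ ω - Δ ω ^ 2),
      mul_le_mul_of_nonneg_left h2 (sq_nonneg (Δ ω)),
      mul_nonneg (sq_nonneg (Δ ω)) (sq_nonneg (ε ω)), sq_nonneg (Δ ω), sq_nonneg (ε ω)]
  -- integrability of T²
  have hTmeas : Measurable (fun ω =>
      ((Y ω - fstar ((X ω * Bstar).trace)) ^ 2 - (Y ω - f ((X ω * B).trace)) ^ 2) ^ 2) := by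
    have h1 : Measurable Y := by
      rw [hY]; exact (hfstar.comp ((htr Bstar).comp hX)).add hε
    exact (((h1.sub (hfstar.comp ((htr Bstar).comp hX))).pow_const 2).sub
      ((h1.sub (hf.comp ((htr B).comp hX))).pow_const 2)).pow_const 2
  have hTint : Integrable (fun ω =>
      ((Y ω - fstar ((X ω * Bstar).trace)) ^ 2 - (Y ω - f ((X ω * B).trace)) ^ 2) ^ 2) P := by
    refine ((hε2Δ2.const_mul 8).add (hΔ2.const_mul (8 * (C + 1) ^ 2))).mono'
      hTmeas.aestronglyMeasurable ?_
    filter_upwards with ω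
    rw [Real.norm_eq_abs, abs_of_nonneg (sq_nonneg _)]
    exact hptwise ω
  -- bound the integral of T²
  have hTbound : ∫ ω,
      ((Y ω - fstar ((X ω * Bstar).trace)) ^ 2 - (Y ω - f ((X ω * B).trace)) ^ 2) ^ 2 ∂P
      ≤ 8 * ((C + 1) ^ 2 + σ ^ 2) * ∫ ω, Δ ω ^ 2 ∂P := by
    calc _ ≤ ∫ ω, (8 * (Δ ω ^ 2 * ε ω ^ 2) + 8 * (C + 1) ^ 2 * Δ ω ^ 2) ∂P :=
          integral_mono_ae hTint ((hε2Δ2.const_mul 8).add (hΔ2.const_mul (8 * (C + 1) ^ 2)))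
            (Filter.Eventually.of_forall hptwise)
      _ = 8 * (∫ ω, Δ ω ^ 2 * ε ω ^ 2 ∂P) + 8 * (C + 1) ^ 2 * ∫ ω, Δ ω ^ 2 ∂P := by
          rw [integral_add (hε2Δ2.const_mul 8) (hΔ2.const_mul (8 * (C + 1) ^ 2)),
            integral_const_mul, integral_const_mul]
      _ ≤ 8 * (σ ^ 2 * ∫ ω, Δ ω ^ 2 ∂P) + 8 * (C + 1) ^ 2 * ∫ ω, Δ ω ^ 2 ∂P := by
          linarith [hsecond]
      _ = 8 * ((C + 1) ^ 2 + σ ^ 2) * ∫ ω, Δ ω ^ 2 ∂P := by ring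
  -- conclude
  rw [← ofReal_integral_eq_lintegral_ofReal hTint
    (Filter.Eventually.of_forall fun ω => sq_nonneg _)]
  apply ENNReal.ofReal_le_ofReal
  rw [hexcess]
  exact hTbound
end

section
/- Let f : ℝ → ℝ be measurable with ‖f‖_∞ ≤ C+1 and let B ∈ ℝ^{d×d} be symmetric with ‖B‖_F = 1. Set T = (Y − f*(⟨X,B*⟩))² − (Y − f(⟨X,B⟩))², v = 8((C+1)² + σ²)·(R(B, f) − R(B*, f*)) and w = 64(C+1)·max(L, C+1). Then for every integer k ≥ 2, E[((T)_+)^k] ≤ (k!/2) v w^{k−2}. -/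
open MeasureTheory Real

/-- If `E[ε|m] = 0` and `D` is bounded and `m`-measurable, then `∫ D ε = 0`. -/
lemma aux_integral_zero {Ω : Type*} {m m0 : MeasurableSpace Ω} (hm : m ≤ m0)
    (P : Measure Ω) [IsProbabilityMeasure P] {ε D : Ω → ℝ}
    (hεint : Integrable ε P) (hD_m : Measurable[m] D)
    {c : ℝ} (hD_bdd : ∀ ω, |D ω| ≤ c)
    (hcond : P[ε | m] =ᵐ[P] 0) :
    ∫ ω, D ω * ε ω ∂P = 0 := by
  have hDmeas : Measurable D := hD_m.mono hm le_rfl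
  have hεD : Integrable (fun ω => D ω * ε ω) P := by
    refine (hεint.abs.const_mul c).mono'
      ((hDmeas.mul hεint.aemeasurable.measurable_mk).aestronglyMeasurable.congr ?_)
      (ae_of_all _ fun ω => ?_)
    · filter_upwards [hεint.aemeasurable.ae_eq_mk] with ω hω using by rw [hω]; rfl
    · rw [Real.norm_eq_abs, abs_mul]
      exact mul_le_mul_of_nonneg_right (hD_bdd ω) (abs_nonneg _)
  have hpull : P[(fun ω => D ω * ε ω) | m] =ᵐ[P] fun ω => D ω * (P[ε | m]) ω := by
    exact
      condExp_mul_of_stronglyMeasurable_left hD_m.stronglyMeasurable hεD hεint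
  have hz : P[(fun ω => D ω * ε ω) | m] =ᵐ[P] fun _ => (0 : ℝ) := by
    filter_upwards [hpull, hcond] with ω h1 h2
    simp [h1, h2]
  calc ∫ ω, D ω * ε ω ∂P
      = ∫ ω, (P[(fun ω => D ω * ε ω) | m]) ω ∂P :=
        (integral_condExp hm (f := fun ω => D ω * ε ω)).symm
    _ = 0 := by rw [integral_congr_ae hz]; simp

/-- If `E[g|m] ≤ K` and `D` is bounded and `m`-measurable, then `∫ D² g ≤ K ∫ D²`. -/
lemma aux_moment {Ω : Type*} {m m0 : MeasurableSpace Ω} (hm : m ≤ m0)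
    (P : Measure Ω) [IsProbabilityMeasure P] {g D : Ω → ℝ}
    (hgint : Integrable g P) (hD_m : Measurable[m] D)
    {c K : ℝ} (hc : 0 ≤ c) (hD_bdd : ∀ ω, |D ω| ≤ c)
    (hcond : P[g | m] ≤ᵐ[P] fun _ => K) :
    ∫ ω, D ω ^ 2 * g ω ∂P ≤ K * ∫ ω, D ω ^ 2 ∂P := by
  have hDmeas : Measurable D := hD_m.mono hm le_rfl
  have hD2int : Integrable (fun ω => D ω ^ 2) P := by
    refine (integrable_const (c ^ 2)).mono'
      ((hDmeas.pow_const 2).aestronglyMeasurable) (ae_of_all _ fun ω => ?_)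
    rw [Real.norm_eq_abs, abs_pow]
    exact pow_le_pow_left₀ (abs_nonneg _) (hD_bdd ω) 2
  have hprod : Integrable (fun ω => D ω ^ 2 * g ω) P := by
    refine (hgint.abs.const_mul (c ^ 2)).mono'
      (((hDmeas.pow_const 2).aestronglyMeasurable).mul hgint.aestronglyMeasurable)
      (ae_of_all _ fun ω => ?_)
    rw [Real.norm_eq_abs, abs_mul, abs_pow]
    refine mul_le_mul_of_nonneg_right ?_ (abs_nonneg _)
    exact pow_le_pow_left₀ (abs_nonneg _) (hD_bdd ω) 2
  have hpull2 : P[(fun ω => D ω ^ 2 * g ω) | m]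
      =ᵐ[P] fun ω => D ω ^ 2 * (P[g | m]) ω := by
    exact
      condExp_mul_of_stronglyMeasurable_left (hD_m.pow_const 2).stronglyMeasurable hprod hgint
  have h2 : ∫ ω, D ω ^ 2 * g ω ∂P = ∫ ω, D ω ^ 2 * (P[g | m]) ω ∂P := by
    rw [← integral_condExp hm (f := fun ω => D ω ^ 2 * g ω)]
    exact integral_congr_ae hpull2
  have h3 : ∫ ω, D ω ^ 2 * (P[g | m]) ω ∂P ≤ ∫ ω, D ω ^ 2 * K ∂P := by
    refine integral_mono_ae (integrable_condExp.congr hpull2) (hD2int.mul_const _) ?_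
    filter_upwards [hcond] with ω hω
    exact mul_le_mul_of_nonneg_left hω (sq_nonneg _)
  rw [h2]
  refine h3.trans_eq ?_
  rw [integral_mul_const, mul_comm]

/-- **Bernstein moment bounds for the risk increment.**
In the model `Y = f*(⟨X,B*⟩) + ε` with `E[ε|X] = 0`, under Assumption N and
Assumption B, for any measurable `f` with `‖f‖_∞ ≤ C+1` and any symmetric `B`
with `‖B‖_F = 1`, the variable `T = (Y - f*(⟨X,B*⟩))² - (Y - f(⟨X,B⟩))²`
satisfies, with `v = 8((C+1)² + σ²)(R(B,f) - R(B*,f*))` and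
`w = 64(C+1) max(L, C+1)`, the bound `E[((T)₊)^k] ≤ (k!/2) v w^(k-2)`
for every integer `k ≥ 2`. -/
theorem kth_moment_bound
    {Ω : Type*} [MeasurableSpace Ω] (P : Measure Ω) [IsProbabilityMeasure P]
    (d : ℕ)
    (X : Ω → Matrix (Fin d) (Fin d) ℝ) (hX : Measurable X)
    (ε : Ω → ℝ) (hε : Measurable ε)
    (Bstar : Matrix (Fin d) (Fin d) ℝ) (hBstar : Bstar.IsSymm)
    (hBstarF : Real.sqrt (∑ i, ∑ j, (Bstar i j) ^ 2) = 1)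
    (fstar : ℝ → ℝ) (hfstar : Measurable fstar)
    (Y : Ω → ℝ) (hY : Y = fun ω => fstar ((X ω * Bstar).trace) + ε ω)
    -- `E[ε | X] = 0`
    (hcond : P[ε | MeasurableSpace.comap X inferInstance] =ᵐ[P] 0)
    -- Assumption N
    (σ L : ℝ) (hσ : 0 < σ) (hL : 0 < L)
    (hNint : ∀ k : ℕ, 2 ≤ k → Integrable (fun ω => |ε ω| ^ k) P)
    (hN : ∀ k : ℕ, 2 ≤ k →
      P[fun ω => |ε ω| ^ k | MeasurableSpace.comap X inferInstance]
        ≤ᵐ[P] fun _ => (k.factorial : ℝ) / 2 * σ ^ 2 * L ^ (k - 2))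
    -- Assumption B
    (C : ℝ) (hC : 1 ≤ C)
    (hXbdd : ∀ᵐ ω ∂P, ∀ i j, |X ω i j| ≤ 1)
    (hfstarBdd : ∀ t, |fstar t| ≤ C)
    -- the pair `(B, f)`
    (B : Matrix (Fin d) (Fin d) ℝ) (hB : B.IsSymm)
    (hBF : Real.sqrt (∑ i, ∑ j, (B i j) ^ 2) = 1)
    (f : ℝ → ℝ) (hf : Measurable f) (hfBdd : ∀ t, |f t| ≤ C + 1) :
    ∀ k : ℕ, 2 ≤ k →
    ∫⁻ ω, ENNReal.ofReal
        ((max ((Y ω - fstar ((X ω * Bstar).trace)) ^ 2 - (Y ω - f ((X ω * B).trace)) ^ 2) 0) ^ k) ∂P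
      ≤ ENNReal.ofReal ((k.factorial : ℝ) / 2 *
          (8 * ((C + 1) ^ 2 + σ ^ 2) *
            ((∫ ω, (Y ω - f ((X ω * B).trace)) ^ 2 ∂P)
              - ∫ ω, (Y ω - fstar ((X ω * Bstar).trace)) ^ 2 ∂P)) *
          (64 * (C + 1) * max L (C + 1)) ^ (k - 2)) := by
  intro k hk
  subst hY
  have hm : MeasurableSpace.comap X inferInstance ≤ ‹MeasurableSpace Ω› := hX.comap_le
  -- trace maps are measurable
  have htr : ∀ M : Matrix (Fin d) (Fin d) ℝ,
      Measurable (fun A : Matrix (Fin d) (Fin d) ℝ => (A * M).trace) := by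
    intro M
    have hrepr : (fun A : Matrix (Fin d) (Fin d) ℝ => (A * M).trace)
        = fun A => ∑ i, ∑ j, A i j * M j i := by
      funext A; simp [Matrix.trace, Matrix.mul_apply, Matrix.diag]
    rw [hrepr]
    exact Finset.measurable_sum _ fun i _ => Finset.measurable_sum _ fun j _ =>
      ((measurable_pi_apply j).comp (measurable_pi_apply i)).mul_const _
  set D : Ω → ℝ := fun ω => fstar ((X ω * Bstar).trace) - f ((X ω * B).trace) with hDdef
  have hXm : Measurable[MeasurableSpace.comap X inferInstance] X :=
    measurable_iff_comap_le.mpr le_rfl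
  have hD_m : Measurable[MeasurableSpace.comap X inferInstance] D :=
    ((hfstar.comp (htr Bstar)).sub (hf.comp (htr B))).comp hXm
  have hDmeas : Measurable D := hD_m.mono hm le_rfl
  have hD_bdd : ∀ ω, |D ω| ≤ 2 * (C + 1) := by
    intro ω
    have h1 := hfstarBdd ((X ω * Bstar).trace)
    have h2 := hfBdd ((X ω * B).trace)
    calc |D ω| ≤ |fstar ((X ω * Bstar).trace)| + |f ((X ω * B).trace)| := abs_sub _ _
      _ ≤ 2 * (C + 1) := by linarith
  -- integrability facts
  have hεsq : Integrable (fun ω => ε ω ^ 2) P := by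
    simpa [sq_abs] using hNint 2 le_rfl
  have hεint : Integrable ε P := by
    refine (hεsq.add (integrable_const 1)).mono' hε.aestronglyMeasurable
      (ae_of_all _ fun ω => ?_)
    simp only [Pi.add_apply, Real.norm_eq_abs]
    nlinarith [sq_nonneg (|ε ω| - 1), abs_nonneg (ε ω), sq_abs (ε ω)]
  have hD2int : Integrable (fun ω => D ω ^ 2) P := by
    refine (integrable_const ((2 * (C + 1)) ^ 2)).mono'
      ((hDmeas.pow_const 2).aestronglyMeasurable) (ae_of_all _ fun ω => ?_)
    rw [Real.norm_eq_abs, abs_pow]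
    exact pow_le_pow_left₀ (abs_nonneg _) (hD_bdd ω) 2
  have hεD : Integrable (fun ω => 2 * (D ω * ε ω)) P := by
    refine ((hεint.abs.const_mul (2 * (2 * (C + 1))))).mono'
      (((hDmeas.mul hε).const_mul 2).aestronglyMeasurable) (ae_of_all _ fun ω => ?_)
    rw [Real.norm_eq_abs, abs_mul, abs_mul]
    have : |D ω| * |ε ω| ≤ 2 * (C + 1) * |ε ω| :=
      mul_le_mul_of_nonneg_right (hD_bdd ω) (abs_nonneg _)
    rw [abs_two]
    nlinarith [abs_nonneg (ε ω)]
  -- `∫ D ε = 0`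
  have hεDzero : ∫ ω, D ω * ε ω ∂P = 0 :=
    aux_integral_zero hm P hεint hD_m hD_bdd hcond
  -- the risk difference equals `∫ D²`
  have hrisk : ((∫ ω, (fstar ((X ω * Bstar).trace) + ε ω - f ((X ω * B).trace)) ^ 2 ∂P)
        - ∫ ω, (fstar ((X ω * Bstar).trace) + ε ω - fstar ((X ω * Bstar).trace)) ^ 2 ∂P)
      = ∫ ω, D ω ^ 2 ∂P := by
    have e1 : (fun ω => (fstar ((X ω * Bstar).trace) + ε ω - f ((X ω * B).trace)) ^ 2)
        = fun ω => ε ω ^ 2 + (2 * (D ω * ε ω) + D ω ^ 2) := by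
      funext ω; simp only [hDdef]; ring
    have e2 : (fun ω => (fstar ((X ω * Bstar).trace) + ε ω - fstar ((X ω * Bstar).trace)) ^ 2)
        = fun ω => ε ω ^ 2 := by
      funext ω; ring
    have hsum : Integrable (fun ω => 2 * (D ω * ε ω) + D ω ^ 2) P := hεD.add hD2int
    rw [e1, e2, integral_add hεsq hsum, integral_add hεD hD2int, integral_const_mul, hεDzero]
    ring
  -- conditional moment bound
  have hstep : ∫ ω, D ω ^ 2 * |ε ω| ^ k ∂P
      ≤ (k.factorial : ℝ) / 2 * σ ^ 2 * L ^ (k - 2) * ∫ ω, D ω ^ 2 ∂P :=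
    aux_moment hm P (hNint k hk) hD_m (by positivity) hD_bdd (hN k hk)
  have hprod : Integrable (fun ω => D ω ^ 2 * |ε ω| ^ k) P := by
    refine ((hNint k hk).const_mul ((2 * (C + 1)) ^ 2)).mono'
      (((hDmeas.pow_const 2).mul (hε.abs.pow_const k)).aestronglyMeasurable)
      (ae_of_all _ fun ω => ?_)
    rw [Real.norm_eq_abs, abs_mul, abs_pow, abs_pow, abs_abs]
    refine mul_le_mul_of_nonneg_right ?_ (pow_nonneg (abs_nonneg _) _)
    exact pow_le_pow_left₀ (abs_nonneg _) (hD_bdd ω) 2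
  -- pointwise bound on `(T₊)^k`
  have hTle : ∀ ω, (max ((ε ω) ^ 2 - (ε ω + D ω) ^ 2) 0) ^ k
      ≤ 2 ^ k * (2 * (C + 1)) ^ (k - 2) * (D ω ^ 2 * |ε ω| ^ k) := by
    intro ω
    have h0 : (0 : ℝ) ≤ 2 * |ε ω| * |D ω| := by positivity
    have h1 : max ((ε ω) ^ 2 - (ε ω + D ω) ^ 2) 0 ≤ 2 * |ε ω| * |D ω| := by
      refine max_le ?_ h0
      nlinarith [abs_mul (ε ω) (D ω), neg_abs_le (ε ω * D ω), sq_nonneg (D ω)]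
    have h2 : (max ((ε ω) ^ 2 - (ε ω + D ω) ^ 2) 0) ^ k ≤ (2 * |ε ω| * |D ω|) ^ k :=
      pow_le_pow_left₀ (le_max_right _ 0) h1 k
    have h3 : (2 * |ε ω| * |D ω|) ^ k
        = (2 ^ k * |ε ω| ^ k * D ω ^ 2) * |D ω| ^ (k - 2) := by
      rw [mul_pow, mul_pow, ← sq_abs (D ω)]
      rw [show |D ω| ^ k = |D ω| ^ (k - 2) * |D ω| ^ 2 by
        rw [← pow_add, Nat.sub_add_cancel hk]]
      ring
    have h4 : |D ω| ^ (k - 2) ≤ (2 * (C + 1)) ^ (k - 2) :=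
      pow_le_pow_left₀ (abs_nonneg _) (hD_bdd ω) _
    have h5 : (2 ^ k * |ε ω| ^ k * D ω ^ 2) * |D ω| ^ (k - 2)
        ≤ (2 ^ k * |ε ω| ^ k * D ω ^ 2) * (2 * (C + 1)) ^ (k - 2) :=
      mul_le_mul_of_nonneg_left h4 (by positivity)
    calc (max ((ε ω) ^ 2 - (ε ω + D ω) ^ 2) 0) ^ k
        ≤ (2 * |ε ω| * |D ω|) ^ k := h2
      _ = (2 ^ k * |ε ω| ^ k * D ω ^ 2) * |D ω| ^ (k - 2) := h3
      _ ≤ (2 ^ k * |ε ω| ^ k * D ω ^ 2) * (2 * (C + 1)) ^ (k - 2) := h5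
      _ = 2 ^ k * (2 * (C + 1)) ^ (k - 2) * (D ω ^ 2 * |ε ω| ^ k) := by ring
  have hTmeas : Measurable (fun ω => (max ((ε ω) ^ 2 - (ε ω + D ω) ^ 2) 0) ^ k) :=
    (((hε.pow_const 2).sub ((hε.add hDmeas).pow_const 2)).max measurable_const).pow_const k
  have hTint : Integrable (fun ω => (max ((ε ω) ^ 2 - (ε ω + D ω) ^ 2) 0) ^ k) P := by
    refine (hprod.const_mul (2 ^ k * (2 * (C + 1)) ^ (k - 2))).mono'
      hTmeas.aestronglyMeasurable (ae_of_all _ fun ω => ?_)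
    rw [Real.norm_eq_abs, abs_of_nonneg (by positivity)]
    exact hTle ω
  -- rewrite the goal in terms of `ε` and `D`
  have hgoal_eq : ∀ ω : Ω,
      (fstar ((X ω * Bstar).trace) + ε ω - fstar ((X ω * Bstar).trace)) ^ 2
        - (fstar ((X ω * Bstar).trace) + ε ω - f ((X ω * B).trace)) ^ 2
      = (ε ω) ^ 2 - (ε ω + D ω) ^ 2 := by
    intro ω; simp only [hDdef]; ring
  simp only [hgoal_eq, hrisk]
  -- convert the lintegral to a Bochner integral
  rw [← ofReal_integral_eq_lintegral_ofReal hTint (ae_of_all _ fun ω => by positivity)]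
  refine ENNReal.ofReal_le_ofReal ?_
  have hI : (0 : ℝ) ≤ ∫ ω, D ω ^ 2 ∂P := integral_nonneg fun ω => sq_nonneg _
  have step1 : ∫ ω, (max ((ε ω) ^ 2 - (ε ω + D ω) ^ 2) 0) ^ k ∂P
      ≤ 2 ^ k * (2 * (C + 1)) ^ (k - 2) * ∫ ω, D ω ^ 2 * |ε ω| ^ k ∂P := by
    rw [← integral_const_mul]
    exact integral_mono hTint (hprod.const_mul _) hTle
  have step2 : 2 ^ k * (2 * (C + 1)) ^ (k - 2) * ∫ ω, D ω ^ 2 * |ε ω| ^ k ∂P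
      ≤ 2 ^ k * (2 * (C + 1)) ^ (k - 2)
        * ((k.factorial : ℝ) / 2 * σ ^ 2 * L ^ (k - 2) * ∫ ω, D ω ^ 2 ∂P) :=
    mul_le_mul_of_nonneg_left hstep (by positivity)
  -- final constant comparison
  have hCpos : (0 : ℝ) < C + 1 := by linarith
  have hbase : 4 * (C + 1) * L ≤ 64 * (C + 1) * max L (C + 1) := by
    nlinarith [le_max_left L (C + 1)]
  have hpow : (4 * (C + 1) * L) ^ (k - 2) ≤ (64 * (C + 1) * max L (C + 1)) ^ (k - 2) :=
    pow_le_pow_left₀ (by positivity) hbase _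
  have hconst : 4 * σ ^ 2 * (4 * (C + 1) * L) ^ (k - 2)
      ≤ 8 * ((C + 1) ^ 2 + σ ^ 2) * (64 * (C + 1) * max L (C + 1)) ^ (k - 2) := by
    have h1 : 4 * σ ^ 2 * (4 * (C + 1) * L) ^ (k - 2)
        ≤ 4 * σ ^ 2 * (64 * (C + 1) * max L (C + 1)) ^ (k - 2) :=
      mul_le_mul_of_nonneg_left hpow (by positivity)
    refine h1.trans ?_
    have h2 : (0 : ℝ) ≤ (64 * (C + 1) * max L (C + 1)) ^ (k - 2) := by positivity
    nlinarith [sq_nonneg (C + 1)]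
  have h2k : (2 : ℝ) ^ k = 2 ^ (k - 2) * 4 := by
    rw [show (4 : ℝ) = 2 ^ 2 by norm_num, ← pow_add, Nat.sub_add_cancel hk]
  have step3 : 2 ^ k * (2 * (C + 1)) ^ (k - 2)
        * ((k.factorial : ℝ) / 2 * σ ^ 2 * L ^ (k - 2) * ∫ ω, D ω ^ 2 ∂P)
      ≤ (k.factorial : ℝ) / 2 * (8 * ((C + 1) ^ 2 + σ ^ 2) * ∫ ω, D ω ^ 2 ∂P)
        * (64 * (C + 1) * max L (C + 1)) ^ (k - 2) := by
    have hfac : (0 : ℝ) ≤ (k.factorial : ℝ) / 2 := by positivity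
    have key : ((k.factorial : ℝ) / 2 * ∫ ω, D ω ^ 2 ∂P)
          * (4 * σ ^ 2 * (4 * (C + 1) * L) ^ (k - 2))
        ≤ ((k.factorial : ℝ) / 2 * ∫ ω, D ω ^ 2 ∂P)
          * (8 * ((C + 1) ^ 2 + σ ^ 2) * (64 * (C + 1) * max L (C + 1)) ^ (k - 2)) :=
      mul_le_mul_of_nonneg_left hconst (mul_nonneg hfac hI)
    calc 2 ^ k * (2 * (C + 1)) ^ (k - 2)
          * ((k.factorial : ℝ) / 2 * σ ^ 2 * L ^ (k - 2) * ∫ ω, D ω ^ 2 ∂P)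
        = ((k.factorial : ℝ) / 2 * ∫ ω, D ω ^ 2 ∂P)
          * (4 * σ ^ 2 * (4 * (C + 1) * L) ^ (k - 2)) := by
          rw [h2k, show (4 * (C + 1) * L) ^ (k - 2)
              = 2 ^ (k - 2) * (2 * (C + 1)) ^ (k - 2) * L ^ (k - 2) by
            rw [← mul_pow, ← mul_pow]; ring_nf]
          ring
      _ ≤ ((k.factorial : ℝ) / 2 * ∫ ω, D ω ^ 2 ∂P)
          * (8 * ((C + 1) ^ 2 + σ ^ 2) * (64 * (C + 1) * max L (C + 1)) ^ (k - 2)) := key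
      _ = (k.factorial : ℝ) / 2 * (8 * ((C + 1) ^ 2 + σ ^ 2) * ∫ ω, D ω ^ 2 ∂P)
          * (64 * (C + 1) * max L (C + 1)) ^ (k - 2) := by ring
  linarith [step1, step2, step3]
end

section
/- Let f : ℝ → ℝ be measurable with ‖f‖_∞ ≤ C+1 and let B ∈ ℝ^{d×d} be symmetric with ‖B‖_F = 1. Then for every λ ∈ (0, n/w), E[ exp( λ ( r_n(B,f) − r_n* − R(B,f) + R* ) ) ] ≤ exp( C₁ λ² (R(B,f) − R*) / ( 2n (1 − wλ/n) ) ). -/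
open MeasureTheory ProbabilityTheory Real

lemma myExp_le (x : ℝ) : Real.exp x ≤ 1 + x + (Real.exp |x| - 1 - |x|) := by
  rcases le_or_gt 0 x with h | h
  · rw [abs_of_nonneg h]; ring_nf; exact le_rfl
  · rw [abs_of_neg h]
    have hs : Real.sinh x ≤ x := Real.sinh_le_self_iff.mpr h.le
    rw [Real.sinh_eq] at hs
    linarith

lemma mySeries (u : ℝ) : Real.exp u - 1 - u = ∑' j : ℕ, u ^ (j + 2) / (Nat.factorial (j + 2)) := by
  have h0 : Real.exp u = ∑' n : ℕ, u ^ n / (Nat.factorial n) := by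
    rw [Real.exp_eq_exp_ℝ, NormedSpace.exp_eq_tsum_div]
  have hs : Summable (fun n : ℕ => u ^ n / (Nat.factorial n)) := Real.summable_pow_div_factorial u
  have h1 := Summable.tsum_eq_zero_add hs
  have hs1 : Summable (fun n : ℕ => u ^ (n + 1) / (Nat.factorial (n + 1))) :=
    (summable_nat_add_iff 1).2 hs
  have h2 := Summable.tsum_eq_zero_add hs1
  simp only [pow_zero, Nat.factorial_zero, pow_one, Nat.factorial_one] at h1 h2
  rw [h0, h1, h2]
  norm_num

lemma trace_mul_measurable {d : ℕ} (M : Matrix (Fin d) (Fin d) ℝ) :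
    Measurable fun x : Matrix (Fin d) (Fin d) ℝ => (x * M).trace := by
  have h : (fun x : Matrix (Fin d) (Fin d) ℝ => (x * M).trace)
      = fun x => ∑ i, ∑ j, x i j * M j i := by
    funext x
    simp [Matrix.trace, Matrix.diag, Matrix.mul_apply]
  rw [h]
  exact Finset.measurable_sum _ fun i _ => Finset.measurable_sum _ fun j _ =>
    ((measurable_pi_apply j).comp (measurable_pi_apply i)).mul_const _

set_option maxHeartbeats 2000000 in
lemma aux_mgf_bound {Ω : Type*} [MeasurableSpace Ω] (P : Measure Ω) [IsProbabilityMeasure P]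
    {d : ℕ}
    (X : Ω → Matrix (Fin d) (Fin d) ℝ) (hX : Measurable X)
    (ε : Ω → ℝ) (hε : Measurable ε)
    (Bstar : Matrix (Fin d) (Fin d) ℝ) (fstar : ℝ → ℝ) (hfstar : Measurable fstar)
    (hcond : P[ε | MeasurableSpace.comap X inferInstance] =ᵐ[P] 0)
    (σ L : ℝ) (hσ : 0 < σ) (hL : 0 < L)
    (hNint : ∀ k : ℕ, 2 ≤ k → Integrable (fun ω => |ε ω| ^ k) P)
    (hN : ∀ k : ℕ, 2 ≤ k →
      P[fun ω => |ε ω| ^ k | MeasurableSpace.comap X inferInstance]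
        ≤ᵐ[P] fun _ => (k.factorial : ℝ) / 2 * σ ^ 2 * L ^ (k - 2))
    (C : ℝ) (hC : 1 ≤ C) (hfstarBdd : ∀ s, |fstar s| ≤ C)
    (B : Matrix (Fin d) (Fin d) ℝ)
    (f : ℝ → ℝ) (hf : Measurable f) (hfBdd : ∀ s, |f s| ≤ C + 1)
    (w c1 : ℝ) (hw : w = 64 * (C + 1) * max L (C + 1))
    (hc1 : c1 = 8 * ((C + 1) ^ 2 + σ ^ 2))
    (v : ℝ)
    (hv : v = ∫ ω, (fstar ((X ω * Bstar).trace) - f ((X ω * B).trace)) ^ 2 ∂P)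
    (t : ℝ) (ht : 0 < t) (htw : w * t < 1) :
    Integrable (fun ω => (fstar ((X ω * Bstar).trace) + ε ω - f ((X ω * B).trace)) ^ 2) P
    ∧ Integrable (fun ω => ε ω ^ 2) P
    ∧ (∫ ω, (fstar ((X ω * Bstar).trace) + ε ω - f ((X ω * B).trace)) ^ 2 ∂P)
        - (∫ ω, ε ω ^ 2 ∂P) = v
    ∧ Integrable (fun ω => Real.exp (t * ((fstar ((X ω * Bstar).trace) + ε ω
          - f ((X ω * B).trace)) ^ 2 - ε ω ^ 2 - v))) P
    ∧ (∫ ω, Real.exp (t * ((fstar ((X ω * Bstar).trace) + ε ω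
          - f ((X ω * B).trace)) ^ 2 - ε ω ^ 2 - v)) ∂P)
        ≤ Real.exp (c1 * v * t ^ 2 / (2 * (1 - w * t))) := by
  have hC1 : (0:ℝ) < C + 1 := by linarith
  have hM : (0:ℝ) < max L (C + 1) := lt_max_of_lt_left hL
  have hwpos : 0 < w := by rw [hw]; positivity
  have hc1pos : 0 < c1 := by rw [hc1]; positivity
  have h1wt : 0 < 1 - w * t := by linarith
  -- measurability of the trace maps
  have htr : ∀ M : Matrix (Fin d) (Fin d) ℝ,
      Measurable fun x : Matrix (Fin d) (Fin d) ℝ => (x * M).trace := by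
    intro M
    have h : (fun x : Matrix (Fin d) (Fin d) ℝ => (x * M).trace)
        = fun x => ∑ i, ∑ j, x i j * M j i := by
      funext x
      simp [Matrix.trace, Matrix.diag, Matrix.mul_apply]
    rw [h]
    exact Finset.measurable_sum _ fun i _ => Finset.measurable_sum _ fun j _ =>
      ((measurable_pi_apply j).comp (measurable_pi_apply i)).mul_const _
  set dm : Matrix (Fin d) (Fin d) ℝ → ℝ :=
    fun x => fstar ((x * Bstar).trace) - f ((x * B).trace) with hdm_def
  have hdm : Measurable dm := (hfstar.comp (htr Bstar)).sub (hf.comp (htr B))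
  set Dx : Ω → ℝ := fun ω => dm (X ω) with hDx_def
  have hDmeas : Measurable Dx := hdm.comp hX
  have hDb : ∀ ω, |Dx ω| ≤ 2 * (C + 1) := by
    intro ω
    have h1 := hfstarBdd ((X ω * Bstar).trace)
    have h2 := hfBdd ((X ω * B).trace)
    simp only [hDx_def, hdm_def]
    rw [abs_sub_comm]
    calc |f ((X ω * B).trace) - fstar ((X ω * Bstar).trace)|
        ≤ |f ((X ω * B).trace)| + |fstar ((X ω * Bstar).trace)| := abs_sub _ _
      _ ≤ 2 * (C + 1) := by linarith
  have hDsq : ∀ ω, Dx ω ^ 2 ≤ 4 * (C + 1) ^ 2 := by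
    intro ω
    have h := hDb ω
    nlinarith [abs_nonneg (Dx ω), sq_abs (Dx ω)]
  -- basic integrabilities
  have hε2 : Integrable (fun ω => |ε ω| ^ 2) P := hNint 2 le_rfl
  have hεint : Integrable ε P := by
    refine Integrable.mono' ((integrable_const (1:ℝ)).add hε2) hε.aestronglyMeasurable ?_
    refine Filter.Eventually.of_forall fun ω => ?_
    simp only [Pi.add_apply, Real.norm_eq_abs]
    nlinarith [abs_nonneg (ε ω), sq_nonneg (|ε ω| - 1)]
  have hDsq_int : Integrable (fun ω => Dx ω ^ 2) P := by
    refine Integrable.mono' (integrable_const (4 * (C + 1) ^ 2))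
      ((hDmeas.pow_const 2).aestronglyMeasurable) ?_
    refine Filter.Eventually.of_forall fun ω => ?_
    rw [Real.norm_eq_abs, abs_of_nonneg (sq_nonneg _)]
    exact hDsq ω
  have hvnn : 0 ≤ v := by
    rw [hv]; exact integral_nonneg fun ω => sq_nonneg _
  have hvle : v ≤ 4 * (C + 1) ^ 2 := by
    rw [hv]
    calc (∫ ω, (fstar ((X ω * Bstar).trace) - f ((X ω * B).trace)) ^ 2 ∂P)
        ≤ ∫ _, 4 * (C + 1) ^ 2 ∂P := by
          refine integral_mono hDsq_int (integrable_const _) fun ω => hDsq ω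
      _ = 4 * (C + 1) ^ 2 := by simp
  have hvint : v = ∫ ω, Dx ω ^ 2 ∂P := hv
  have hDε_int : Integrable (fun ω => Dx ω * ε ω) P := by
    refine hεint.bdd_mul (c := 2 * (C + 1)) hDmeas.aestronglyMeasurable ?_
    exact Filter.Eventually.of_forall fun ω => by rw [Real.norm_eq_abs]; exact hDb ω
  -- cross term vanishes
  have hcross : ∫ ω, Dx ω * ε ω ∂P = 0 := by
    have hm0 : MeasurableSpace.comap X
        (inferInstance : MeasurableSpace (Matrix (Fin d) (Fin d) ℝ))
        ≤ ‹MeasurableSpace Ω› := measurable_iff_comap_le.mp hX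
    set m : MeasurableSpace Ω := MeasurableSpace.comap X inferInstance with hm_def
    have hDm : Measurable[m] Dx := hdm.comp (Measurable.of_comap_le le_rfl)
    have hDsm : StronglyMeasurable[m] Dx := hDm.stronglyMeasurable
    have hpull : P[Dx * ε | m] =ᵐ[P] Dx * P[ε | m] :=
      condExp_mul_of_stronglyMeasurable_left hDsm (by exact hDε_int) hεint
    have e1 : ∫ ω, Dx ω * ε ω ∂P = ∫ ω, (P[Dx * ε | m]) ω ∂P :=
      (integral_condExp hm0).symm
    rw [e1, integral_congr_ae hpull]
    have h : (Dx * P[ε | m]) =ᵐ[P] (fun _ => (0:ℝ)) := by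
      filter_upwards [hcond] with ω hω
      simp [Pi.mul_apply, hω]
    rw [integral_congr_ae h, integral_zero]
  -- conditional moment bound
  have hDmom : ∀ k : ℕ, 2 ≤ k →
      (∫ ω, Dx ω ^ 2 * |ε ω| ^ k ∂P) ≤ (k.factorial : ℝ) / 2 * σ ^ 2 * L ^ (k - 2) * v := by
    intro k hk
    have hek := hNint k hk
    have hDsqb : ∀ᵐ ω ∂P, ‖Dx ω ^ 2‖ ≤ 4 * (C + 1) ^ 2 :=
      Filter.Eventually.of_forall fun ω => by
        rw [Real.norm_eq_abs, abs_of_nonneg (sq_nonneg _)]; exact hDsq ω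
    have hintprod : Integrable (fun ω => Dx ω ^ 2 * |ε ω| ^ k) P :=
      hek.bdd_mul (hDmeas.pow_const 2).aestronglyMeasurable hDsqb
    have hm0 : MeasurableSpace.comap X
        (inferInstance : MeasurableSpace (Matrix (Fin d) (Fin d) ℝ))
        ≤ ‹MeasurableSpace Ω› := measurable_iff_comap_le.mp hX
    set m : MeasurableSpace Ω := MeasurableSpace.comap X inferInstance with hm_def
    have hDm : Measurable[m] Dx := hdm.comp (Measurable.of_comap_le le_rfl)
    have hDsm2 : StronglyMeasurable[m] (fun ω => Dx ω ^ 2) :=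
      (hDm.pow_const 2).stronglyMeasurable
    have hpull : P[(fun ω => Dx ω ^ 2) * (fun ω => |ε ω| ^ k) | m]
        =ᵐ[P] (fun ω => Dx ω ^ 2) * P[(fun ω => |ε ω| ^ k) | m] :=
      condExp_mul_of_stronglyMeasurable_left hDsm2 (by exact hintprod) hek
    have e1 : ∫ ω, Dx ω ^ 2 * |ε ω| ^ k ∂P
        = ∫ ω, (P[(fun ω => Dx ω ^ 2) * (fun ω => |ε ω| ^ k) | m]) ω ∂P :=
      (integral_condExp hm0).symm
    have hcondint : Integrable ((fun ω => Dx ω ^ 2) * P[(fun ω => |ε ω| ^ k) | m]) P :=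
      integrable_condExp.bdd_mul (hDmeas.pow_const 2).aestronglyMeasurable hDsqb
    calc ∫ ω, Dx ω ^ 2 * |ε ω| ^ k ∂P
        = ∫ ω, ((fun ω => Dx ω ^ 2) * P[(fun ω => |ε ω| ^ k) | m]) ω ∂P := by
          rw [e1]; exact integral_congr_ae hpull
      _ ≤ ∫ ω, Dx ω ^ 2 * ((k.factorial : ℝ) / 2 * σ ^ 2 * L ^ (k - 2)) ∂P := by
          refine integral_mono_ae hcondint (hDsq_int.mul_const _) ?_
          filter_upwards [hN k hk] with ω hω
          exact mul_le_mul_of_nonneg_left hω (sq_nonneg _)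
      _ = (k.factorial : ℝ) / 2 * σ ^ 2 * L ^ (k - 2) * v := by
          rw [integral_mul_const, hvint]; ring
  -- the centered loss difference
  set g : Ω → ℝ := fun ω => (fstar ((X ω * Bstar).trace) + ε ω
      - f ((X ω * B).trace)) ^ 2 - ε ω ^ 2 - v with hg_def
  have hgeq : ∀ ω, g ω = Dx ω ^ 2 + 2 * (Dx ω * ε ω) - v := by
    intro ω; simp only [hg_def, hDx_def, hdm_def]; ring
  have hgmeas : Measurable g := by
    have h1 : Measurable fun ω => fstar ((X ω * Bstar).trace) := hfstar.comp ((htr Bstar).comp hX)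
    have h2 : Measurable fun ω => f ((X ω * B).trace) := hf.comp ((htr B).comp hX)
    exact ((((h1.add hε).sub h2).pow_const 2).sub (hε.pow_const 2)).sub_const v
  set K : ℝ := 4 * (C + 1) ^ 2 with hK_def
  have hKpos : 0 < K := by positivity
  set a : Ω → ℝ := fun ω => |Dx ω ^ 2 - v| with ha_def
  set b : Ω → ℝ := fun ω => 2 * (|Dx ω| * |ε ω|) with hb_def
  have hann : ∀ ω, 0 ≤ a ω := fun ω => abs_nonneg _
  have hbnn : ∀ ω, 0 ≤ b ω := fun ω => by positivity
  have haK : ∀ ω, a ω ≤ K := by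
    intro ω
    refine abs_le.mpr ⟨?_, ?_⟩
    · have h1 := sq_nonneg (Dx ω); linarith
    · have h1 := hDsq ω; linarith
  have hameas : Measurable a := ((hDmeas.pow_const 2).sub_const v).abs
  have hbmeas : Measurable b := (hDmeas.abs.mul hε.abs).const_mul 2
  have hgabs : ∀ ω, |g ω| ≤ a ω + b ω := by
    intro ω
    rw [hgeq ω]
    calc |Dx ω ^ 2 + 2 * (Dx ω * ε ω) - v|
        = |(Dx ω ^ 2 - v) + 2 * (Dx ω * ε ω)| := by ring_nf
      _ ≤ |Dx ω ^ 2 - v| + |2 * (Dx ω * ε ω)| := abs_add_le _ _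
      _ = a ω + b ω := by rw [ha_def, hb_def, abs_mul, abs_mul, abs_two]
  -- integrability of powers
  have hak_int : ∀ k : ℕ, Integrable (fun ω => a ω ^ k) P := by
    intro k
    refine Integrable.mono' (integrable_const (K ^ k))
      ((hameas.pow_const k).aestronglyMeasurable)
      (Filter.Eventually.of_forall fun ω => ?_)
    rw [Real.norm_eq_abs, abs_of_nonneg (pow_nonneg (hann ω) k)]
    exact pow_le_pow_left₀ (hann ω) (haK ω) k
  have hbk_int : ∀ k : ℕ, 2 ≤ k → Integrable (fun ω => b ω ^ k) P := by
    intro k hk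
    have h : (fun ω => b ω ^ k) = fun ω => (2 * |Dx ω|) ^ k * |ε ω| ^ k := by
      funext ω; rw [hb_def]; ring
    rw [h]
    refine (hNint k hk).bdd_mul (c := (4 * (C + 1)) ^ k)
      (((hDmeas.abs.const_mul 2).pow_const k).aestronglyMeasurable)
      (Filter.Eventually.of_forall fun ω => ?_)
    rw [Real.norm_eq_abs, abs_of_nonneg (by positivity)]
    refine pow_le_pow_left₀ (by positivity) ?_ k
    have h2 := hDb ω; linarith
  -- second moment of a
  have hD4_int : Integrable (fun ω => Dx ω ^ 4) P := by
    refine Integrable.mono' (integrable_const (K ^ 2))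
      ((hDmeas.pow_const 4).aestronglyMeasurable)
      (Filter.Eventually.of_forall fun ω => ?_)
    rw [Real.norm_eq_abs, abs_of_nonneg (by positivity)]
    have h1 := hDsq ω
    have h2 := sq_nonneg (Dx ω)
    calc Dx ω ^ 4 = Dx ω ^ 2 * Dx ω ^ 2 := by ring
      _ ≤ K * K := by nlinarith
      _ = K ^ 2 := by ring
  have ha2 : ∫ ω, a ω ^ 2 ∂P ≤ K * v := by
    have hD4le : ∫ ω, Dx ω ^ 4 ∂P ≤ K * v := by
      calc ∫ ω, Dx ω ^ 4 ∂P ≤ ∫ ω, K * Dx ω ^ 2 ∂P := by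
            refine integral_mono hD4_int (hDsq_int.const_mul K) fun ω => ?_
            have h1 := hDsq ω
            have h2 := sq_nonneg (Dx ω)
            calc Dx ω ^ 4 = Dx ω ^ 2 * Dx ω ^ 2 := by ring
              _ ≤ K * Dx ω ^ 2 := by nlinarith
        _ = K * v := by rw [integral_const_mul, hvint]
    have hint1 : Integrable (fun ω => Dx ω ^ 4 - 2 * v * Dx ω ^ 2) P := by
      exact hD4_int.sub (hDsq_int.const_mul (2 * v))
    have hexp : ∫ ω, a ω ^ 2 ∂P = (∫ ω, Dx ω ^ 4 ∂P) - 2 * v * v + v ^ 2 := by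
      have e0 : (fun ω => a ω ^ 2) = fun ω => Dx ω ^ 4 - 2 * v * Dx ω ^ 2 + v ^ 2 := by
        funext ω; rw [ha_def]; simp only; rw [sq_abs]; ring
      rw [e0, integral_add hint1 (integrable_const _),
        integral_sub hD4_int (hDsq_int.const_mul (2 * v)), integral_const_mul,
        integral_const, ← hvint]
      simp
    nlinarith [sq_nonneg v]
  -- product integrability (reused)
  have hDprod_int : ∀ k : ℕ, 2 ≤ k → Integrable (fun ω => Dx ω ^ 2 * |ε ω| ^ k) P := by
    intro k hk
    refine (hNint k hk).bdd_mul (c := K) (hDmeas.pow_const 2).aestronglyMeasurable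
      (Filter.Eventually.of_forall fun ω => ?_)
    rw [Real.norm_eq_abs, abs_of_nonneg (sq_nonneg _)]
    exact hDsq ω
  -- constants
  have hw8a : 8 * (C + 1) ^ 2 ≤ w := by
    rw [hw]
    have h1 : C + 1 ≤ max L (C + 1) := le_max_right L (C + 1)
    nlinarith [mul_le_mul_of_nonneg_left h1 (show (0:ℝ) ≤ 64 * (C + 1) by positivity)]
  have hw8b : 8 * (C + 1) * L ≤ w := by
    rw [hw]
    have h1 : L ≤ max L (C + 1) := le_max_left L (C + 1)
    nlinarith [mul_le_mul_of_nonneg_left h1 (show (0:ℝ) ≤ 64 * (C + 1) by positivity), hL]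
  -- integrability of |g|^(j+2)
  have hgk_int : ∀ j : ℕ, Integrable (fun ω => |g ω| ^ (j + 2)) P := by
    intro j
    have h2k : 2 ≤ j + 2 := by omega
    have hmaj : Integrable (fun ω => 2 ^ (j + 1) * (a ω ^ (j + 2) + b ω ^ (j + 2))) P := by
      exact ((hak_int (j + 2)).add (hbk_int (j + 2) h2k)).const_mul _
    refine Integrable.mono' hmaj ((hgmeas.abs.pow_const _).aestronglyMeasurable)
      (Filter.Eventually.of_forall fun ω => ?_)
    rw [Real.norm_eq_abs, abs_of_nonneg (pow_nonneg (abs_nonneg _) _)]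
    calc |g ω| ^ (j + 2) ≤ (a ω + b ω) ^ (j + 2) :=
          pow_le_pow_left₀ (abs_nonneg _) (hgabs ω) _
      _ ≤ 2 ^ (j + 2 - 1) * (a ω ^ (j + 2) + b ω ^ (j + 2)) := add_pow_le (hann ω) (hbnn ω) _
      _ = 2 ^ (j + 1) * (a ω ^ (j + 2) + b ω ^ (j + 2)) := by norm_num
  -- the moment bound
  have hgk : ∀ j : ℕ, (∫ ω, |g ω| ^ (j + 2) ∂P)
      ≤ ((j + 2).factorial : ℝ) / 2 * c1 * w ^ j * v := by
    intro j
    have h2k : 2 ≤ j + 2 := by omega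
    have hFge : (1:ℝ) ≤ ((j + 2).factorial : ℝ) / 2 := by
      have h1 : (2:ℕ) ≤ (j + 2).factorial := le_trans (by omega) (Nat.self_le_factorial _)
      have h2 : (2:ℝ) ≤ ((j + 2).factorial : ℝ) := by exact_mod_cast h1
      linarith
    have hFnn : (0:ℝ) ≤ ((j + 2).factorial : ℝ) / 2 := by linarith
    have hptw : ∀ ω, |g ω| ^ (j + 2) ≤ 2 ^ (j + 1) * (a ω ^ (j + 2) + b ω ^ (j + 2)) := by
      intro ω
      calc |g ω| ^ (j + 2) ≤ (a ω + b ω) ^ (j + 2) :=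
            pow_le_pow_left₀ (abs_nonneg _) (hgabs ω) _
        _ ≤ 2 ^ (j + 2 - 1) * (a ω ^ (j + 2) + b ω ^ (j + 2)) := add_pow_le (hann ω) (hbnn ω) _
        _ = 2 ^ (j + 1) * (a ω ^ (j + 2) + b ω ^ (j + 2)) := by norm_num
    have hmaj : Integrable (fun ω => 2 ^ (j + 1) * (a ω ^ (j + 2) + b ω ^ (j + 2))) P := by
      exact ((hak_int (j + 2)).add (hbk_int (j + 2) h2k)).const_mul _
    have hak_bd : ∫ ω, a ω ^ (j + 2) ∂P ≤ K ^ j * (K * v) := by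
      calc ∫ ω, a ω ^ (j + 2) ∂P ≤ ∫ ω, K ^ j * a ω ^ 2 ∂P := by
            refine integral_mono (hak_int _) ((hak_int 2).const_mul _) fun ω => ?_
            calc a ω ^ (j + 2) = a ω ^ j * a ω ^ 2 := by ring
              _ ≤ K ^ j * a ω ^ 2 :=
                  mul_le_mul_of_nonneg_right (pow_le_pow_left₀ (hann ω) (haK ω) _) (sq_nonneg _)
        _ = K ^ j * ∫ ω, a ω ^ 2 ∂P := integral_const_mul _ _
        _ ≤ K ^ j * (K * v) := mul_le_mul_of_nonneg_left ha2 (by positivity)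
    have hbk_bd : ∫ ω, b ω ^ (j + 2) ∂P
        ≤ 2 ^ (j + 2) * ((2 * (C + 1)) ^ j
            * (((j + 2).factorial : ℝ) / 2 * σ ^ 2 * L ^ j * v)) := by
      have hmono : ∀ ω, b ω ^ (j + 2)
          ≤ 2 ^ (j + 2) * ((2 * (C + 1)) ^ j * (Dx ω ^ 2 * |ε ω| ^ (j + 2))) := by
        intro ω
        have h1 : |Dx ω| ^ (j + 2) ≤ (2 * (C + 1)) ^ j * Dx ω ^ 2 := by
          calc |Dx ω| ^ (j + 2) = |Dx ω| ^ j * |Dx ω| ^ 2 := by ring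
            _ ≤ (2 * (C + 1)) ^ j * Dx ω ^ 2 := by
                rw [sq_abs]
                exact mul_le_mul_of_nonneg_right
                  (pow_le_pow_left₀ (abs_nonneg _) (hDb ω) _) (sq_nonneg _)
        have h2 := mul_le_mul_of_nonneg_right h1 (pow_nonneg (abs_nonneg (ε ω)) (j + 2))
        calc b ω ^ (j + 2) = 2 ^ (j + 2) * (|Dx ω| ^ (j + 2) * |ε ω| ^ (j + 2)) := by
              rw [hb_def]; ring
          _ ≤ 2 ^ (j + 2) * ((2 * (C + 1)) ^ j * Dx ω ^ 2 * |ε ω| ^ (j + 2)) := by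
              have h3 : (0:ℝ) ≤ 2 ^ (j + 2) := by positivity
              exact mul_le_mul_of_nonneg_left h2 h3
          _ = 2 ^ (j + 2) * ((2 * (C + 1)) ^ j * (Dx ω ^ 2 * |ε ω| ^ (j + 2))) := by ring
      have hmajb : Integrable
          (fun ω => 2 ^ (j + 2) * ((2 * (C + 1)) ^ j * (Dx ω ^ 2 * |ε ω| ^ (j + 2)))) P := by
        exact ((hDprod_int (j + 2) h2k).const_mul _).const_mul _
      calc ∫ ω, b ω ^ (j + 2) ∂P
          ≤ ∫ ω, 2 ^ (j + 2) * ((2 * (C + 1)) ^ j * (Dx ω ^ 2 * |ε ω| ^ (j + 2))) ∂P :=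
            integral_mono (hbk_int _ h2k) hmajb hmono
        _ = 2 ^ (j + 2) * ((2 * (C + 1)) ^ j * ∫ ω, Dx ω ^ 2 * |ε ω| ^ (j + 2) ∂P) := by
            rw [integral_const_mul, integral_const_mul]
        _ ≤ 2 ^ (j + 2) * ((2 * (C + 1)) ^ j
            * (((j + 2).factorial : ℝ) / 2 * σ ^ 2 * L ^ j * v)) := by
            have hd := hDmom (j + 2) h2k
            simp only [Nat.add_sub_cancel] at hd
            have h4 : (0:ℝ) ≤ (2 * (C + 1)) ^ j := by positivity
            have h5 : (0:ℝ) ≤ 2 ^ (j + 2) := by positivity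
            exact mul_le_mul_of_nonneg_left (mul_le_mul_of_nonneg_left hd h4) h5
    have hA : (8 * (C + 1) ^ 2) ^ j ≤ w ^ j :=
      pow_le_pow_left₀ (by positivity) hw8a j
    have hB' : (8 * (C + 1) * L) ^ j ≤ w ^ j :=
      pow_le_pow_left₀ (by positivity) hw8b j
    calc ∫ ω, |g ω| ^ (j + 2) ∂P
        ≤ ∫ ω, 2 ^ (j + 1) * (a ω ^ (j + 2) + b ω ^ (j + 2)) ∂P :=
          integral_mono (hgk_int j) hmaj hptw
      _ = 2 ^ (j + 1) * ((∫ ω, a ω ^ (j + 2) ∂P) + ∫ ω, b ω ^ (j + 2) ∂P) := by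
          rw [integral_const_mul, integral_add (hak_int _) (hbk_int _ h2k)]
      _ ≤ 2 ^ (j + 1) * ((K ^ j * (K * v)) + 2 ^ (j + 2) * ((2 * (C + 1)) ^ j
            * (((j + 2).factorial : ℝ) / 2 * σ ^ 2 * L ^ j * v))) := by
          have h6 : (0:ℝ) ≤ 2 ^ (j + 1) := by positivity
          exact mul_le_mul_of_nonneg_left (add_le_add hak_bd hbk_bd) h6
      _ ≤ ((j + 2).factorial : ℝ) / 2 * c1 * w ^ j * v := by
          rw [hc1, hK_def]
          have p8 : (8:ℝ) ^ j = 2 ^ j * 4 ^ j := by rw [← mul_pow]; norm_num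
          have p4 : (4:ℝ) ^ j = 2 ^ j * 2 ^ j := by rw [← mul_pow]; norm_num
          have e1 : (2:ℝ) ^ (j + 1) * ((4 * (C + 1) ^ 2) ^ j * ((4 * (C + 1) ^ 2) * v))
              = 8 * (C + 1) ^ 2 * ((8 * (C + 1) ^ 2) ^ j * v) := by
            simp only [mul_pow, pow_succ, p8, p4]; ring
          have e2 : (2:ℝ) ^ (j + 1) * (2 ^ (j + 2) * ((2 * (C + 1)) ^ j
              * (((j + 2).factorial : ℝ) / 2 * σ ^ 2 * L ^ j * v)))
              = 8 * (((j + 2).factorial : ℝ) / 2) * σ ^ 2 * ((8 * (C + 1) * L) ^ j * v) := by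
            simp only [mul_pow, pow_succ, p8, p4]; ring
          have b1 : 8 * (C + 1) ^ 2 * ((8 * (C + 1) ^ 2) ^ j * v)
              ≤ ((j + 2).factorial : ℝ) / 2 * (8 * (C + 1) ^ 2) * (w ^ j * v) := by
            have h7 : (8 * (C + 1) ^ 2) ^ j * v ≤ w ^ j * v :=
              mul_le_mul_of_nonneg_right hA hvnn
            have h8 : (0:ℝ) ≤ 8 * (C + 1) ^ 2 := by positivity
            have h9 := mul_le_mul_of_nonneg_left h7 h8
            have h10 : (0:ℝ) ≤ 8 * (C + 1) ^ 2 * (w ^ j * v) := by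
              have := mul_nonneg (pow_nonneg hwpos.le j) hvnn
              positivity
            nlinarith [h9, h10, hFge]
          have b2 : 8 * (((j + 2).factorial : ℝ) / 2) * σ ^ 2 * ((8 * (C + 1) * L) ^ j * v)
              ≤ ((j + 2).factorial : ℝ) / 2 * (8 * σ ^ 2) * (w ^ j * v) := by
            have h7 : (8 * (C + 1) * L) ^ j * v ≤ w ^ j * v :=
              mul_le_mul_of_nonneg_right hB' hvnn
            have h8 : (0:ℝ) ≤ 8 * (((j + 2).factorial : ℝ) / 2) * σ ^ 2 := by positivity
            have h9 := mul_le_mul_of_nonneg_left h7 h8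
            nlinarith [h9]
          have e3 : ((j + 2).factorial : ℝ) / 2 * (8 * (C + 1) ^ 2) * (w ^ j * v)
              + ((j + 2).factorial : ℝ) / 2 * (8 * σ ^ 2) * (w ^ j * v)
              = ((j + 2).factorial : ℝ) / 2 * (8 * ((C + 1) ^ 2 + σ ^ 2)) * w ^ j * v := by
            ring
          nlinarith [b1, b2, e1, e2, e3]
  -- the series bound
  set q : ℝ := c1 * v * t ^ 2 / (2 * (1 - w * t)) with hq_def
  have hqnn : 0 ≤ q := by
    rw [hq_def]
    exact div_nonneg (by positivity) (by linarith)
  set S : Ω → ℝ := fun ω => Real.exp (t * |g ω|) - 1 - t * |g ω| with hS_def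
  have hSnn : ∀ ω, 0 ≤ S ω := by
    intro ω
    have h := Real.add_one_le_exp (t * |g ω|)
    simp only [hS_def]
    linarith
  have hSmeas : Measurable S :=
    (((hgmeas.abs.const_mul t).exp).sub_const 1).sub (hgmeas.abs.const_mul t)
  have hSsum : ∀ ω, S ω = ∑' j : ℕ, (t * |g ω|) ^ (j + 2) / ((j + 2).factorial : ℝ) := by
    intro ω
    simp only [hS_def]
    exact mySeries (t * |g ω|)
  have hsummable : ∀ ω, Summable fun j : ℕ => (t * |g ω|) ^ (j + 2) / ((j + 2).factorial : ℝ) :=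
    fun ω => (summable_nat_add_iff 2).2 (Real.summable_pow_div_factorial (t * |g ω|))
  have hfacne : ∀ j : ℕ, ((j + 2).factorial : ℝ) ≠ 0 :=
    fun j => Nat.cast_ne_zero.mpr (Nat.factorial_ne_zero _)
  have hterm : ∀ j : ℕ, (∫⁻ ω, ENNReal.ofReal ((t * |g ω|) ^ (j + 2)
      / ((j + 2).factorial : ℝ)) ∂P) ≤ ENNReal.ofReal ((c1 * v * t ^ 2 / 2) * (w * t) ^ j) := by
    intro j
    have e0 : ∀ ω, (t * |g ω|) ^ (j + 2) / ((j + 2).factorial : ℝ)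
        = (t ^ (j + 2) / ((j + 2).factorial : ℝ)) * |g ω| ^ (j + 2) := by
      intro ω; rw [mul_pow]; ring
    have hcnn : 0 ≤ t ^ (j + 2) / ((j + 2).factorial : ℝ) := by positivity
    calc (∫⁻ ω, ENNReal.ofReal ((t * |g ω|) ^ (j + 2) / ((j + 2).factorial : ℝ)) ∂P)
        = ∫⁻ ω, ENNReal.ofReal (t ^ (j + 2) / ((j + 2).factorial : ℝ))
            * ENNReal.ofReal (|g ω| ^ (j + 2)) ∂P := by
          refine lintegral_congr fun ω => ?_
          rw [e0 ω, ENNReal.ofReal_mul hcnn]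
      _ = ENNReal.ofReal (t ^ (j + 2) / ((j + 2).factorial : ℝ))
            * ∫⁻ ω, ENNReal.ofReal (|g ω| ^ (j + 2)) ∂P := by
          rw [lintegral_const_mul _ ((hgmeas.abs.pow_const _).ennreal_ofReal)]
      _ = ENNReal.ofReal (t ^ (j + 2) / ((j + 2).factorial : ℝ))
            * ENNReal.ofReal (∫ ω, |g ω| ^ (j + 2) ∂P) := by
          rw [← ofReal_integral_eq_lintegral_ofReal (hgk_int j)
            (Filter.Eventually.of_forall fun ω => pow_nonneg (abs_nonneg _) _)]
      _ ≤ ENNReal.ofReal (t ^ (j + 2) / ((j + 2).factorial : ℝ))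
            * ENNReal.ofReal (((j + 2).factorial : ℝ) / 2 * c1 * w ^ j * v) := by
          exact mul_le_mul_right (ENNReal.ofReal_le_ofReal (hgk j)) _
      _ = ENNReal.ofReal ((c1 * v * t ^ 2 / 2) * (w * t) ^ j) := by
          rw [← ENNReal.ofReal_mul hcnn]
          congr 1
          field_simp
          ring
  have hwtnn : 0 ≤ w * t := by positivity
  have hgeom : Summable fun j : ℕ => (c1 * v * t ^ 2 / 2) * (w * t) ^ j :=
    (summable_geometric_of_lt_one hwtnn htw).mul_left _
  have hlint : ∫⁻ ω, ENNReal.ofReal (S ω) ∂P ≤ ENNReal.ofReal q := by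
    calc ∫⁻ ω, ENNReal.ofReal (S ω) ∂P
        = ∫⁻ ω, ∑' j : ℕ, ENNReal.ofReal ((t * |g ω|) ^ (j + 2)
            / ((j + 2).factorial : ℝ)) ∂P := by
          refine lintegral_congr fun ω => ?_
          rw [hSsum ω, ENNReal.ofReal_tsum_of_nonneg (fun j => by positivity) (hsummable ω)]
      _ = ∑' j : ℕ, ∫⁻ ω, ENNReal.ofReal ((t * |g ω|) ^ (j + 2)
            / ((j + 2).factorial : ℝ)) ∂P := by
          exact lintegral_tsum fun j =>
            ((((hgmeas.abs.const_mul t).pow_const _).div_const _).ennreal_ofReal).aemeasurable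
      _ ≤ ∑' j : ℕ, ENNReal.ofReal ((c1 * v * t ^ 2 / 2) * (w * t) ^ j) :=
          ENNReal.tsum_le_tsum hterm
      _ = ENNReal.ofReal (∑' j : ℕ, (c1 * v * t ^ 2 / 2) * (w * t) ^ j) :=
          (ENNReal.ofReal_tsum_of_nonneg (fun j => by positivity) hgeom).symm
      _ = ENNReal.ofReal q := by
          rw [tsum_mul_left, tsum_geometric_of_lt_one hwtnn htw, hq_def]
          congr 1
          field_simp
  have hSint : Integrable S P := by
    refine ⟨hSmeas.aestronglyMeasurable, ?_⟩
    rw [hasFiniteIntegral_iff_ofReal (Filter.Eventually.of_forall hSnn)]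
    exact lt_of_le_of_lt hlint ENNReal.ofReal_lt_top
  have hSle : ∫ ω, S ω ∂P ≤ q := by
    have h1 : ENNReal.ofReal (∫ ω, S ω ∂P) = ∫⁻ ω, ENNReal.ofReal (S ω) ∂P :=
      ofReal_integral_eq_lintegral_ofReal hSint (Filter.Eventually.of_forall hSnn)
    have h2 : ENNReal.ofReal (∫ ω, S ω ∂P) ≤ ENNReal.ofReal q := h1 ▸ hlint
    exact (ENNReal.ofReal_le_ofReal_iff hqnn).mp h2
  -- mean of g is zero
  have hgint : Integrable g P := by
    have e : (fun ω => Dx ω ^ 2 + 2 * (Dx ω * ε ω) - v) = g := funext fun ω => (hgeq ω).symm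
    rw [← e]
    exact (hDsq_int.add (hDε_int.const_mul 2)).sub (integrable_const v)
  have hgmean : ∫ ω, g ω ∂P = 0 := by
    have e : g =ᵐ[P] fun ω => Dx ω ^ 2 + 2 * (Dx ω * ε ω) - v :=
      Filter.Eventually.of_forall hgeq
    have hi1 : Integrable (fun ω => Dx ω ^ 2 + 2 * (Dx ω * ε ω)) P := by
      exact hDsq_int.add (hDε_int.const_mul 2)
    rw [integral_congr_ae e, integral_sub hi1 (integrable_const v),
      integral_add hDsq_int (hDε_int.const_mul 2),
      integral_const_mul, hcross, integral_const, ← hvint]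
    simp
  -- final pointwise bound and conclusion
  have hptF : ∀ ω, Real.exp (t * g ω) ≤ 1 + t * g ω + S ω := by
    intro ω
    have h := myExp_le (t * g ω)
    have habs : |t * g ω| = t * |g ω| := by rw [abs_mul, abs_of_pos ht]
    rw [habs] at h
    simp only [hS_def]
    linarith
  have hF_int : Integrable (fun ω => 1 + t * g ω + S ω) P := by
    exact ((integrable_const (1:ℝ)).add (hgint.const_mul t)).add hSint
  have hFle : ∫ ω, (1 + t * g ω + S ω) ∂P ≤ Real.exp q := by
    rw [integral_add (by exact (integrable_const (1:ℝ)).add (hgint.const_mul t)) hSint,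
      integral_add (integrable_const (1:ℝ)) (hgint.const_mul t), integral_const_mul,
      hgmean, integral_const]
    simp only [measure_univ, ENNReal.toReal_one, smul_eq_mul, one_mul, mul_zero, add_zero]
    have h := Real.add_one_le_exp q
    have hPu : P.real Set.univ = 1 := by simp
    linarith [hSle]
  have hexp_int : Integrable (fun ω => Real.exp (t * g ω)) P := by
    refine Integrable.mono' hF_int ((hgmeas.const_mul t).exp.aestronglyMeasurable)
      (Filter.Eventually.of_forall fun ω => ?_)
    rw [Real.norm_eq_abs, abs_of_pos (Real.exp_pos _)]
    exact hptF ω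
  have hfinal : ∫ ω, Real.exp (t * g ω) ∂P ≤ Real.exp q :=
    le_trans (integral_mono hexp_int hF_int hptF) hFle
  -- assemble the five conclusions
  have hε2' : Integrable (fun ω => ε ω ^ 2) P := by
    have h := hε2
    simp only [sq_abs] at h
    exact h
  have hsq_int : Integrable
      (fun ω => (fstar ((X ω * Bstar).trace) + ε ω - f ((X ω * B).trace)) ^ 2) P := by
    have e : (fun ω => (fstar ((X ω * Bstar).trace) + ε ω - f ((X ω * B).trace)) ^ 2)
        = fun ω => g ω + (ε ω ^ 2 + v) := by
      funext ω; simp only [hg_def]; ring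
    have hi2 : Integrable (fun ω => ε ω ^ 2 + v) P := by
      exact hε2'.add (integrable_const v)
    rw [e]
    exact hgint.add hi2
  refine ⟨hsq_int, hε2', ?_, hexp_int, hfinal⟩
  have e : (fun ω => (fstar ((X ω * Bstar).trace) + ε ω - f ((X ω * B).trace)) ^ 2)
      =ᵐ[P] fun ω => g ω + (ε ω ^ 2 + v) := by
    refine Filter.Eventually.of_forall fun ω => ?_
    simp only [hg_def]; ring
  have hi2 : Integrable (fun ω => ε ω ^ 2 + v) P := by
    exact hε2'.add (integrable_const v)
  rw [integral_congr_ae e, integral_add hgint hi2,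
    integral_add hε2' (integrable_const v), integral_const, hgmean]
  simp


set_option maxHeartbeats 2000000 in
/-- **Exponential moment inequality (Lemma 3, second inequality, pointwise version).**
For i.i.d. data from the model `Y = f*(⟨X,B*⟩) + ε` under Assumptions N and B, for any
measurable `f` with `‖f‖_∞ ≤ C+1`, any symmetric `B` with `‖B‖_F = 1`, and any
`λ ∈ (0, n/w)` with `w = 64(C+1)max(L, C+1)` and `C₁ = 8((C+1)² + σ²)`:
`E[exp(λ(r_n(B,f) - r_n* - R(B,f) + R*))] ≤ exp(C₁ λ² (R(B,f) - R*) / (2n(1 - wλ/n)))`. -/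
theorem exp_moment_empirical_minus_risk
    {Ω : Type*} [MeasurableSpace Ω] (P : Measure Ω) [IsProbabilityMeasure P]
    (d n : ℕ) (hn : 0 < n)
    (X : Fin n → Ω → Matrix (Fin d) (Fin d) ℝ) (hX : ∀ i, Measurable (X i))
    (ε : Fin n → Ω → ℝ) (hε : ∀ i, Measurable (ε i))
    (Bstar : Matrix (Fin d) (Fin d) ℝ) (hBstar : Bstar.IsSymm)
    (hBstarF : Real.sqrt (∑ i, ∑ j, (Bstar i j) ^ 2) = 1)
    (fstar : ℝ → ℝ) (hfstar : Measurable fstar)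
    (Y : Fin n → Ω → ℝ) (hY : Y = fun i ω => fstar ((X i ω * Bstar).trace) + ε i ω)
    -- the pairs `(X i, Y i)` are i.i.d.
    (hindep : iIndepFun (fun i ω => (X i ω, ε i ω)) P)
    (hident : ∀ i, Measure.map (fun ω => (X i ω, ε i ω)) P
      = Measure.map (fun ω => (X ⟨0, hn⟩ ω, ε ⟨0, hn⟩ ω)) P)
    -- `E[ε | X] = 0`
    (hcond : ∀ i, P[ε i | MeasurableSpace.comap (X i) inferInstance] =ᵐ[P] 0)
    -- Assumption N
    (σ L : ℝ) (hσ : 0 < σ) (hL : 0 < L)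
    (hNint : ∀ i, ∀ k : ℕ, 2 ≤ k → Integrable (fun ω => |ε i ω| ^ k) P)
    (hN : ∀ i, ∀ k : ℕ, 2 ≤ k →
      P[fun ω => |ε i ω| ^ k | MeasurableSpace.comap (X i) inferInstance]
        ≤ᵐ[P] fun _ => (k.factorial : ℝ) / 2 * σ ^ 2 * L ^ (k - 2))
    -- Assumption B
    (C : ℝ) (hC : 1 ≤ C)
    (hXbdd : ∀ i, ∀ᵐ ω ∂P, ∀ a b, |X i ω a b| ≤ 1)
    (hfstarBdd : ∀ t, |fstar t| ≤ C)
    -- the pair `(B, f)`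
    (B : Matrix (Fin d) (Fin d) ℝ) (hB : B.IsSymm)
    (hBF : Real.sqrt (∑ i, ∑ j, (B i j) ^ 2) = 1)
    (f : ℝ → ℝ) (hf : Measurable f) (hfBdd : ∀ t, |f t| ≤ C + 1)
    -- risks and empirical risks
    (R : ℝ) (hR : R = ∫ ω, (Y ⟨0, hn⟩ ω - f ((X ⟨0, hn⟩ ω * B).trace)) ^ 2 ∂P)
    (Rstar : ℝ)
    (hRstar : Rstar = ∫ ω, (Y ⟨0, hn⟩ ω - fstar ((X ⟨0, hn⟩ ω * Bstar).trace)) ^ 2 ∂P)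
    (rn : Ω → ℝ)
    (hrn : rn = fun ω => (1 / n : ℝ) * ∑ i, (Y i ω - f ((X i ω * B).trace)) ^ 2)
    (rnstar : Ω → ℝ)
    (hrnstar : rnstar
      = fun ω => (1 / n : ℝ) * ∑ i, (Y i ω - fstar ((X i ω * Bstar).trace)) ^ 2)
    -- constants and the inverse temperature
    (w c1 : ℝ) (hw : w = 64 * (C + 1) * max L (C + 1))
    (hc1 : c1 = 8 * ((C + 1) ^ 2 + σ ^ 2))
    (lam : ℝ) (hlam : lam ∈ Set.Ioo 0 ((n : ℝ) / w)) :
    ∫⁻ ω, ENNReal.ofReal (Real.exp (lam * (rn ω - rnstar ω - R + Rstar))) ∂P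
      ≤ ENNReal.ofReal
          (Real.exp (c1 * lam ^ 2 * (R - Rstar) / (2 * n * (1 - w * lam / n)))) := by
  obtain ⟨hlam0, hlamlt⟩ := hlam
  have hC1 : (0:ℝ) < C + 1 := by linarith
  have hM : (0:ℝ) < max L (C + 1) := lt_max_of_lt_left hL
  have hwpos : 0 < w := by rw [hw]; positivity
  have hnpos : (0:ℝ) < n := Nat.cast_pos.mpr hn
  set i0 : Fin n := ⟨0, hn⟩ with hi0_def
  set t : ℝ := lam / n with ht_def
  have ht : 0 < t := div_pos hlam0 hnpos
  have htw : w * t < 1 := by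
    rw [ht_def]
    have h1 : lam * w < n := (lt_div_iff₀ hwpos).mp hlamlt
    rw [mul_div_assoc'] ; rw [div_lt_one hnpos]; linarith
  set v : ℝ := ∫ ω, (fstar ((X i0 ω * Bstar).trace) - f ((X i0 ω * B).trace)) ^ 2 ∂P
    with hv_def
  -- transfer of v across indices
  have hψ : Measurable (fun p : Matrix (Fin d) (Fin d) ℝ × ℝ =>
      (fstar ((p.1 * Bstar).trace) - f ((p.1 * B).trace)) ^ 2) :=
    ((hfstar.comp ((trace_mul_measurable Bstar).comp measurable_fst)).sub
      (hf.comp ((trace_mul_measurable B).comp measurable_fst))).pow_const 2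
  have hpair : ∀ i, Measurable (fun ω => (X i ω, ε i ω)) := fun i => (hX i).prodMk (hε i)
  have hvi : ∀ i : Fin n,
      v = ∫ ω, (fstar ((X i ω * Bstar).trace) - f ((X i ω * B).trace)) ^ 2 ∂P := by
    intro i
    have h1 : ∫ ω, (fstar ((X i ω * Bstar).trace) - f ((X i ω * B).trace)) ^ 2 ∂P
        = ∫ p : Matrix (Fin d) (Fin d) ℝ × ℝ,
            (fstar ((p.1 * Bstar).trace) - f ((p.1 * B).trace)) ^ 2
            ∂(Measure.map (fun ω => (X i ω, ε i ω)) P) :=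
      (integral_map (hpair i).aemeasurable hψ.aestronglyMeasurable).symm
    rw [h1, hident i,
      integral_map (hpair i0).aemeasurable hψ.aestronglyMeasurable, hv_def]
  -- apply the one-sample lemma
  have hiaux := fun i : Fin n =>
    aux_mgf_bound P (X i) (hX i) (ε i) (hε i) Bstar fstar hfstar (hcond i) σ L hσ hL
      (hNint i) (hN i) C hC hfstarBdd B f hf hfBdd w c1 hw hc1 v (hvi i) t ht htw
  -- R - Rstar = v
  have hRv : R - Rstar = v := by
    have h3 := (hiaux i0).2.2.1
    have hRe : R = ∫ ω, (fstar ((X i0 ω * Bstar).trace) + ε i0 ω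
        - f ((X i0 ω * B).trace)) ^ 2 ∂P := by
      rw [hR, hY]
    have hRse : Rstar = ∫ ω, ε i0 ω ^ 2 ∂P := by
      rw [hRstar, hY]
      refine integral_congr_ae (Filter.Eventually.of_forall fun ω => ?_)
      ring
    rw [hRe, hRse]
    exact h3
  -- the sample functions
  set G : Fin n → Ω → ℝ := fun i ω => (fstar ((X i ω * Bstar).trace) + ε i ω
      - f ((X i ω * B).trace)) ^ 2 - ε i ω ^ 2 - v with hG_def
  have hGmeas : ∀ i, Measurable (G i) := by
    intro i
    have h1 : Measurable fun ω => fstar ((X i ω * Bstar).trace) :=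
      hfstar.comp ((trace_mul_measurable Bstar).comp (hX i))
    have h2 : Measurable fun ω => f ((X i ω * B).trace) :=
      hf.comp ((trace_mul_measurable B).comp (hX i))
    exact ((((h1.add (hε i)).sub h2).pow_const 2).sub ((hε i).pow_const 2)).sub_const v
  -- independence of the G i
  have hφ : Measurable (fun p : Matrix (Fin d) (Fin d) ℝ × ℝ =>
      (fstar ((p.1 * Bstar).trace) + p.2 - f ((p.1 * B).trace)) ^ 2 - p.2 ^ 2 - v) := by
    have h1 : Measurable fun p : Matrix (Fin d) (Fin d) ℝ × ℝ =>
        fstar ((p.1 * Bstar).trace) :=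
      hfstar.comp ((trace_mul_measurable Bstar).comp measurable_fst)
    have h2 : Measurable fun p : Matrix (Fin d) (Fin d) ℝ × ℝ => f ((p.1 * B).trace) :=
      hf.comp ((trace_mul_measurable B).comp measurable_fst)
    exact ((((h1.add measurable_snd).sub h2).pow_const 2).sub
      (measurable_snd.pow_const 2)).sub_const v
  have hGindep : iIndepFun G P := by
    exact hindep.comp (fun _ p => (fstar ((p.1 * Bstar).trace) + p.2
      - f ((p.1 * B).trace)) ^ 2 - p.2 ^ 2 - v) (fun _ => hφ)
  -- pointwise identity for the exponent
  have hptsum : ∀ ω, lam * (rn ω - rnstar ω - R + Rstar) = t * (∑ i, G i) ω := by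
    intro ω
    have hsum_apply : (∑ i, G i) ω = ∑ i, G i ω := by
      rw [Finset.sum_apply]
    have hG2 : ∑ i, G i ω
        = (∑ i, (fstar ((X i ω * Bstar).trace) + ε i ω - f ((X i ω * B).trace)) ^ 2)
          - (∑ i, ε i ω ^ 2) - n * v := by
      rw [hG_def]
      rw [Finset.sum_sub_distrib, Finset.sum_sub_distrib, Finset.sum_const,
        Finset.card_univ, Fintype.card_fin, nsmul_eq_mul]
    have hrn1 : rn ω = (1 / n : ℝ)
        * ∑ i, (fstar ((X i ω * Bstar).trace) + ε i ω - f ((X i ω * B).trace)) ^ 2 := by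
      rw [hrn, hY]
    have hrns1 : rnstar ω = (1 / n : ℝ) * ∑ i, ε i ω ^ 2 := by
      rw [hrnstar, hY]
      simp only
      congr 1
      refine Finset.sum_congr rfl fun i _ => ?_
      ring
    have hR' : R = v + Rstar := by linarith [hRv]
    have hne : (n:ℝ) ≠ 0 := ne_of_gt hnpos
    have key : ∀ SA Se : ℝ, lam * ((1 / n : ℝ) * SA - (1 / n : ℝ) * Se - (v + Rstar) + Rstar)
        = lam / (n:ℝ) * (SA - Se - (n:ℝ) * v) := by
      intro SA Se
      field_simp
      ring
    rw [hsum_apply, hG2, hrn1, hrns1, ht_def, hR']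
    exact key _ _
  -- integrability of the product
  have hGexp_int : ∀ i, Integrable (fun ω => Real.exp (t * G i ω)) P := by
    intro i
    exact (hiaux i).2.2.2.1
  have hsum_int : Integrable (fun ω => Real.exp (t * (∑ i, G i) ω)) P :=
    hGindep.integrable_exp_mul_sum hGmeas fun i _ => hGexp_int i
  -- rewrite the left-hand side
  have hLHS : ∫⁻ ω, ENNReal.ofReal (Real.exp (lam * (rn ω - rnstar ω - R + Rstar))) ∂P
      = ENNReal.ofReal (∫ ω, Real.exp (t * (∑ i, G i) ω) ∂P) := by
    rw [ofReal_integral_eq_lintegral_ofReal hsum_int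
      (Filter.Eventually.of_forall fun ω => (Real.exp_pos _).le)]
    refine lintegral_congr fun ω => ?_
    rw [hptsum ω]
  rw [hLHS]
  -- the mgf product bound
  set q : ℝ := c1 * v * t ^ 2 / (2 * (1 - w * t)) with hq_def
  have hmgf : ∫ ω, Real.exp (t * (∑ i, G i) ω) ∂P ≤ Real.exp (n * q) := by
    have h1 : ∫ ω, Real.exp (t * (∑ i, G i) ω) ∂P = mgf (∑ i, G i) P t := rfl
    rw [h1, hGindep.mgf_sum hGmeas]
    have h2 : ∀ i : Fin n, mgf (G i) P t ≤ Real.exp q := by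
      intro i
      exact (hiaux i).2.2.2.2
    calc ∏ i : Fin n, mgf (G i) P t ≤ ∏ _i : Fin n, Real.exp q :=
          Finset.prod_le_prod (fun i _ => mgf_nonneg) (fun i _ => h2 i)
      _ = Real.exp q ^ n := by rw [Finset.prod_const, Finset.card_univ, Fintype.card_fin]
      _ = Real.exp (n * q) := by rw [← Real.exp_nat_mul]
  refine le_trans (ENNReal.ofReal_le_ofReal hmgf) (ENNReal.ofReal_le_ofReal ?_)
  rw [Real.exp_le_exp, hRv]
  have hne : (n:ℝ) ≠ 0 := ne_of_gt hnpos
  have h1wtpos : 0 < 1 - w * t := by linarith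
  have h2 : 1 - w * (lam / ↑n) ≠ 0 := by
    rw [ht_def] at h1wtpos; exact ne_of_gt h1wtpos
  have h3 : 1 - w * lam / ↑n ≠ 0 := by
    have e : 1 - w * lam / ↑n = 1 - w * (lam / ↑n) := by ring
    rw [e]; exact h2
  have hd1 : (2*(1 - w*t)) ≠ 0 := ne_of_gt (by linarith)
  have h1wtpos' : 0 < 1 - w * lam / (n:ℝ) := by
    have e : 1 - w * lam / (n:ℝ) = 1 - w * (lam / (n:ℝ)) := by ring
    rw [e, ← ht_def]; exact h1wtpos
  have hd2 : (2*(n:ℝ)*(1 - w*lam/n)) ≠ 0 :=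
    ne_of_gt (mul_pos (mul_pos two_pos hnpos) h1wtpos')
  have hqe : (n:ℝ) * q = c1 * lam ^ 2 * v / (2 * n * (1 - w * lam / n)) := by
    rw [hq_def, ← mul_div_assoc, div_eq_div_iff hd1 hd2, ht_def]
    field_simp
  exact le_of_eq hqe
end

section
/- Let d ≥ 2, let σ_{d−1} be the uniform (normalized surface) probability measure on the unit sphere S^{d−1} ⊂ ℝ^d, let U ∈ S^{d−1}, and let η ∈ (0, 1]. Then σ_{d−1}( { u ∈ S^{d−1} : ‖u − U‖₂ ≤ η } ) ≥ η^{d−1} / (2^d π). -/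
open MeasureTheory Metric

/-- The restriction of a linear isometry of `ℝ^d` to the unit sphere. -/
noncomputable def sphereMap {d : ℕ}
    (T : EuclideanSpace ℝ (Fin d) ≃ₗᵢ[ℝ] EuclideanSpace ℝ (Fin d))
    (u : sphere (0 : EuclideanSpace ℝ (Fin d)) 1) :
    sphere (0 : EuclideanSpace ℝ (Fin d)) 1 :=
  ⟨T u, by
    rw [mem_sphere_zero_iff_norm, T.norm_map, ← mem_sphere_zero_iff_norm]
    exact u.2⟩

namespace SphereCapAux

open Real Pointwise


lemma gammaAux : ∀ n : ℕ, √π * Real.Gamma ((n+2+1)/2) ≤ 2 * Real.Gamma ((n+2)/2+1) := by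
  intro n
  induction n using Nat.strong_induction_on with
  | _ n ih =>
    match n, ih with
    | 0, _ =>
      have h1 : ((0:ℕ)+2+1 : ℝ)/2 = 1/2 + 1 := by norm_num
      have h2 : ((0:ℕ)+2 : ℝ)/2 + 1 = 1 + 1 := by norm_num
      rw [h1, h2, Real.Gamma_add_one (by norm_num), Real.Gamma_add_one (by norm_num),
        Real.Gamma_one_half_eq, Real.Gamma_one]
      have h3 : √π * (1/2 * √π) = π/2 := by
        rw [show √π * (1/2 * √π) = √π * √π / 2 by ring, Real.mul_self_sqrt pi_nonneg]
      rw [h3]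
      nlinarith [pi_le_four]
    | 1, _ =>
      have h1 : ((1:ℕ)+2+1 : ℝ)/2 = 1 + 1 := by norm_num
      have h2 : ((1:ℕ)+2 : ℝ)/2 + 1 = (1/2 + 1) + 1 := by norm_num
      rw [h1, h2, Real.Gamma_add_one (by norm_num), Real.Gamma_add_one (by norm_num),
        Real.Gamma_add_one (by norm_num), Real.Gamma_one_half_eq, Real.Gamma_one]
      nlinarith [Real.sqrt_nonneg π, Real.sq_sqrt pi_nonneg, pi_gt_three]
    | (m+2), ih =>
      have IH := ih m (by omega)
      have h1 : ((m+2:ℕ)+2+1 : ℝ)/2 = ((m:ℕ)+2+1)/2 + 1 := by push_cast; ring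
      have h2 : ((m+2:ℕ)+2 : ℝ)/2 + 1 = (((m:ℕ)+2)/2 + 1) + 1 := by push_cast; ring
      have hp1 : ((m:ℕ)+2+1 : ℝ)/2 ≠ 0 := by positivity
      have hp2 : (((m:ℕ)+2 : ℝ)/2 + 1) ≠ 0 := by positivity
      rw [h1, h2, Real.Gamma_add_one hp1, Real.Gamma_add_one hp2]
      have hg1 : 0 < Real.Gamma (((m:ℕ)+2+1)/2) := Real.Gamma_pos_of_pos (by positivity)
      have hg2 : 0 < Real.Gamma (((m:ℕ)+2)/2+1) := Real.Gamma_pos_of_pos (by positivity)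
      have hs : (0:ℝ) ≤ √π := Real.sqrt_nonneg π
      nlinarith [IH, mul_le_mul_of_nonneg_left IH (show (0:ℝ) ≤ ((m:ℕ)+2+1)/2 by positivity)]

lemma sqrt3_key : (2:ℝ) ≤ (√3 - 1) * π := by
  have h53 : (5/3:ℝ) < √3 := by
    rw [show (5/3:ℝ) = √((5/3)^2) by rw [Real.sqrt_sq]; norm_num]
    exact Real.sqrt_lt_sqrt (by positivity) (by norm_num)
  nlinarith [pi_gt_three]

lemma real_ineq (m : ℕ) (η : ℝ) (hη0 : 0 < η) :
    η^(m+1)/(2^(m+2)*π) * ((1:ℝ)^(m+2) * (√π^(m+2)/Gamma (((m:ℝ)+2)/2+1)))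
      ≤ (√3/2 - 1/2) * ((η/2)^(m+1) * (√π^(m+1)/Gamma (((m:ℝ)+1)/2+1))) := by
  set G1 := Gamma (((m:ℝ)+1)/2+1) with hG1
  set G2 := Gamma (((m:ℝ)+2)/2+1) with hG2
  have hg1 : 0 < G1 := Real.Gamma_pos_of_pos (by positivity)
  have hg2 : 0 < G2 := Real.Gamma_pos_of_pos (by positivity)
  have key : √π * G1 ≤ (√3 - 1) * π * G2 := by
    have h0 := gammaAux m
    have he : ((m:ℝ)+2+1)/2 = ((m:ℝ)+1)/2+1 := by ring
    rw [he] at h0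
    calc √π * G1 ≤ 2 * G2 := h0
      _ ≤ ((√3 - 1) * π) * G2 := by nlinarith [sqrt3_key, hg2]
  set C : ℝ := η^(m+1)*√π^(m+1)/(2^(m+2)*π*G1*G2) with hC
  have hCpos : 0 ≤ C := by positivity
  have hL : η^(m+1)/(2^(m+2)*π) * ((1:ℝ)^(m+2) * (√π^(m+2)/G2)) = (√π * G1) * C := by
    rw [one_pow, pow_succ √π (m+1), hC]
    field_simp
  have hR : (√3/2 - 1/2) * ((η/2)^(m+1) * (√π^(m+1)/G1)) = ((√3 - 1) * π * G2) * C := by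
    rw [div_pow η 2 (m+1), hC, pow_succ (2:ℝ) (m+1)]
    field_simp
  rw [hL, hR]
  exact mul_le_mul_of_nonneg_right key hCpos

variable {d : ℕ}

local notation "E" => EuclideanSpace ℝ (Fin d)
local notation "S" => sphere (0 : EuclideanSpace ℝ (Fin d)) 1

/-- The cap on the sphere with center `v` and (chordal) radius `η`. -/
def cap (v : EuclideanSpace ℝ (Fin d)) (η : ℝ) : Set (sphere (0 : EuclideanSpace ℝ (Fin d)) 1) :=
  {u | ‖(u : EuclideanSpace ℝ (Fin d)) - v‖ ≤ η}

lemma measurableSet_cap (v : E) (η : ℝ) : MeasurableSet (cap v η) :=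
  (isClosed_le ((continuous_subtype_val.sub continuous_const).norm) continuous_const).measurableSet

lemma continuous_sphereMap (T : E ≃ₗᵢ[ℝ] E) : Continuous (sphereMap T) :=
  Continuous.subtype_mk (T.continuous.comp continuous_subtype_val) _

lemma sphereMap_preimage_cap (T : E ≃ₗᵢ[ℝ] E) (v : E) (η : ℝ) :
    sphereMap T ⁻¹' (cap v η) = cap (T.symm v) η := by
  ext u
  simp only [cap, Set.mem_preimage, Set.mem_setOf_eq, sphereMap]
  rw [show (T : E → E) u - v = T (u - T.symm v) by
    rw [map_sub, T.apply_symm_apply], T.norm_map]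

/-- Existence of a linear isometry sending `w` to `v` when `‖v‖ = ‖w‖`. -/
lemma exists_isometry (v w : E) (h : ‖v‖ = ‖w‖) : ∃ T : E ≃ₗᵢ[ℝ] E, T.symm v = w := by
  refine ⟨(Submodule.reflection (ℝ ∙ (v - w))ᗮ).symm, ?_⟩
  rw [LinearIsometryEquiv.symm_symm]
  exact Submodule.reflection_sub h

/-- Any invariant measure gives equal mass to caps of the same radius. -/
lemma cap_const (μ : Measure S)
    (hinv : ∀ T : E ≃ₗᵢ[ℝ] E, Measure.map (sphereMap T) μ = μ)
    (v w : E) (h : ‖v‖ = ‖w‖) (η : ℝ) : μ (cap v η) = μ (cap w η) := by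
  obtain ⟨T, hT⟩ := exists_isometry v w h
  conv_lhs => rw [← hinv T]
  rw [Measure.map_apply (continuous_sphereMap T).measurable (measurableSet_cap v η),
    sphereMap_preimage_cap, hT]

lemma volume_preimage_isometry (T : E ≃ₗᵢ[ℝ] E) (Y : Set E) :
    volume (⇑T ⁻¹' Y) = volume Y := by
  let e : E ≃ᵐ E := T.toHomeomorph.toMeasurableEquiv
  have h1 : volume (⇑T ⁻¹' Y) = volume (e ⁻¹' Y) := rfl
  rw [h1, ← MeasurableEquiv.map_apply e Y]
  congr 1
  exact T.measurePreserving.map_eq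

lemma image_preimage_sphereMap (T : E ≃ₗᵢ[ℝ] E) (A : Set S) :
    Subtype.val '' (sphereMap T ⁻¹' A) = ⇑T ⁻¹' (Subtype.val '' A) := by
  ext x
  constructor
  · rintro ⟨u, hu, rfl⟩
    exact ⟨sphereMap T u, hu, rfl⟩
  · rintro ⟨a, ha, hax⟩
    have hx : x ∈ sphere (0:E) 1 := by
      rw [mem_sphere_zero_iff_norm, ← T.norm_map, ← hax, ← mem_sphere_zero_iff_norm]
      exact a.2
    refine ⟨⟨x, hx⟩, ?_, rfl⟩
    show sphereMap T ⟨x, hx⟩ ∈ A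
    have : sphereMap T ⟨x, hx⟩ = a := Subtype.ext hax.symm
    rw [this]; exact ha

lemma smul_preimage_isometry (T : E ≃ₗᵢ[ℝ] E) (X : Set E) :
    Set.Ioo (0:ℝ) 1 • (⇑T ⁻¹' X) = ⇑T ⁻¹' (Set.Ioo (0:ℝ) 1 • X) := by
  ext y
  simp only [Set.mem_smul, Set.mem_preimage]
  constructor
  · rintro ⟨t, ht, z, hz, rfl⟩
    exact ⟨t, ht, T z, hz, (_root_.map_smul T t z).symm⟩
  · rintro ⟨t, ht, x, hx, hty⟩
    refine ⟨t, ht, T.symm x, by simpa using hx, ?_⟩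
    apply T.injective
    rw [_root_.map_smul, T.apply_symm_apply, hty]

lemma toSphere_cap_const (v w : E) (h : ‖v‖ = ‖w‖) (η : ℝ) :
    (volume : Measure E).toSphere (cap v η) = (volume : Measure E).toSphere (cap w η) := by
  obtain ⟨T, hT⟩ := exists_isometry v w h
  rw [← hT, ← sphereMap_preimage_cap,
    Measure.toSphere_apply' _ ((measurableSet_cap v η).preimage (continuous_sphereMap T).measurable),
    Measure.toSphere_apply' _ (measurableSet_cap v η),
    image_preimage_sphereMap, smul_preimage_isometry, volume_preimage_isometry]

lemma fubini_caps (σ : Measure S) [IsProbabilityMeasure σ]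
    (hinv : ∀ T : E ≃ₗᵢ[ℝ] E, Measure.map (sphereMap T) σ = σ)
    (v : E) (hv : ‖v‖ = 1) (η : ℝ) :
    σ (cap v η) * (volume : Measure E).toSphere Set.univ
      = (volume : Measure E).toSphere (cap v η) := by
  set ν := (volume : Measure E).toSphere with hν
  set D : Set (S × S) := {p | ‖(p.1 : E) - (p.2 : E)‖ ≤ η} with hDdef
  have hD : MeasurableSet D :=
    (isClosed_le (((continuous_subtype_val.comp continuous_fst).sub
      (continuous_subtype_val.comp continuous_snd)).norm) continuous_const).measurableSet
  have h1 : (σ.prod ν) D = ν (cap v η) := by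
    rw [Measure.prod_apply hD]
    have : ∀ u : S, ν (Prod.mk u ⁻¹' D) = ν (cap v η) := by
      intro u
      have hpre : Prod.mk u ⁻¹' D = cap (u : E) η := by
        ext w
        simp only [hDdef, cap, Set.mem_preimage, Set.mem_setOf_eq, norm_sub_rev]
      rw [hpre]
      exact toSphere_cap_const _ _ ((mem_sphere_zero_iff_norm.mp u.2).trans hv.symm) η
    rw [lintegral_congr this, lintegral_const, measure_univ, mul_one]
  have h2 : (σ.prod ν) D = σ (cap v η) * ν Set.univ := by
    rw [Measure.prod_apply_symm hD]
    have : ∀ w : S, σ ((fun u => (u, w)) ⁻¹' D) = σ (cap v η) := by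
      intro w
      have hpre : (fun u : S => (u, w)) ⁻¹' D = cap (w : E) η := rfl
      rw [hpre]
      exact cap_const σ hinv _ _ ((mem_sphere_zero_iff_norm.mp w.2).trans hv.symm) η
    rw [lintegral_congr this, lintegral_const]
  rw [← h2, h1]

/-- Volume of the cylinder `(1/2, √3/2) × B_{m+1}(0, η/2)` inside `ℝ^{m+2}`. -/
lemma volume_cylinder (m : ℕ) (η : ℝ) (hη0 : 0 < η) :
    volume {y : EuclideanSpace ℝ (Fin (m+2)) |
        y 0 ∈ Set.Ioo (1/2:ℝ) (√3/2) ∧ ∑ i : Fin (m+1), (y i.succ)^2 < (η/2)^2}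
      = ENNReal.ofReal (√3/2 - 1/2)
          * volume (ball (0 : EuclideanSpace ℝ (Fin (m+1))) (η/2)) := by
  set B' : Set (Fin (m+1) → ℝ) := {w | ∑ i, (w i)^2 < (η/2)^2} with hB'
  set C' : Set (Fin (m+2) → ℝ) :=
    {y | y 0 ∈ Set.Ioo (1/2:ℝ) (√3/2) ∧ ∑ i : Fin (m+1), (y i.succ)^2 < (η/2)^2} with hC'
  have hF : volume {y : EuclideanSpace ℝ (Fin (m+2)) |
        y 0 ∈ Set.Ioo (1/2:ℝ) (√3/2) ∧ ∑ i : Fin (m+1), (y i.succ)^2 < (η/2)^2}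
      = volume C' := by
    calc volume {y : EuclideanSpace ℝ (Fin (m+2)) |
          y 0 ∈ Set.Ioo (1/2:ℝ) (√3/2) ∧ ∑ i : Fin (m+1), (y i.succ)^2 < (η/2)^2}
        = volume ((MeasurableEquiv.toLp 2 (Fin (m+2) → ℝ)).symm ⁻¹' C') := rfl
      _ = (volume.map (MeasurableEquiv.toLp 2 (Fin (m+2) → ℝ)).symm) C' :=
          (MeasurableEquiv.map_apply _ _).symm
      _ = volume C' := by
          rw [(EuclideanSpace.volume_preserving_symm_measurableEquiv_toLp _).map_eq]
  rw [hF]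
  have hC'eq : C' = (MeasurableEquiv.piFinSuccAbove (fun _ : Fin (m+2) => ℝ) 0) ⁻¹'
      (Set.Ioo (1/2:ℝ) (√3/2) ×ˢ B') := by
    ext y
    simp only [hC', hB', Set.mem_preimage, Set.mem_prod, Set.mem_setOf_eq,
      MeasurableEquiv.piFinSuccAbove_apply, Fin.insertNthEquiv_symm_apply,
      Fin.removeNth, Fin.succAbove_zero]
  have hψ : volume C' = volume (Set.Ioo (1/2:ℝ) (√3/2) ×ˢ B') := by
    rw [hC'eq, ← MeasurableEquiv.map_apply,
      (volume_preserving_piFinSuccAbove (fun _ : Fin (m+2) => ℝ) 0).map_eq]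
  rw [hψ, Measure.volume_eq_prod, Measure.prod_prod, Real.volume_Ioo]
  congr 1
  have hBball : B' = ((MeasurableEquiv.toLp 2 (Fin (m+1) → ℝ)).symm).symm ⁻¹'
      (ball (0 : EuclideanSpace ℝ (Fin (m+1))) (η/2)) := by
    ext w
    simp only [hB', Set.mem_preimage, mem_ball_zero_iff, Set.mem_setOf_eq,
      EuclideanSpace.norm_eq]
    rw [Real.sqrt_lt' (by positivity)]
    constructor
    · intro h; convert h using 2 with i; rw [Real.norm_eq_abs, sq_abs]; rfl
    · intro h; convert h using 2 with i; rw [Real.norm_eq_abs, sq_abs]; rfl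
  rw [hBball, ← MeasurableEquiv.map_apply,
    (MeasurePreserving.symm _ (EuclideanSpace.volume_preserving_symm_measurableEquiv_toLp (Fin (m+1)))).map_eq]

set_option maxHeartbeats 1000000 in
lemma cylinder_subset (m : ℕ) (η : ℝ) (hη0 : 0 < η) (hη1 : η ≤ 1) :
    {y : EuclideanSpace ℝ (Fin (m+2)) |
        y 0 ∈ Set.Ioo (1/2:ℝ) (√3/2) ∧ ∑ i : Fin (m+1), (y i.succ)^2 < (η/2)^2}
    ⊆ Set.Ioo (0:ℝ) 1 • (Subtype.val ''
        cap (EuclideanSpace.single (0 : Fin (m+2)) (1:ℝ)) η) := by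
  rintro y ⟨⟨hs1, hs2⟩, hq⟩
  set s := y 0 with hs
  set q := ∑ i : Fin (m+1), (y i.succ)^2 with hqdef
  have hqnn : (0:ℝ) ≤ q := by positivity
  have hnormy : ‖y‖ = √(s^2 + q) := by
    rw [EuclideanSpace.norm_eq]
    congr 1
    rw [Fin.sum_univ_succ]
    congr 1
    · rw [Real.norm_eq_abs, sq_abs]
    · exact Finset.sum_congr rfl fun i _ => by rw [Real.norm_eq_abs, sq_abs]
  set t := ‖y‖ with htdef
  have hty : t^2 = s^2 + q := by
    rw [hnormy, Real.sq_sqrt (by positivity)]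
  have hs3 : (0:ℝ) < s := by nlinarith
  have ht0 : 0 < t := by nlinarith [norm_nonneg y]
  have hts : s ≤ t := by nlinarith
  have ht1 : t < 1 := by
    have hs4 : s^2 < 3/4 := by
      have : (√3/2)^2 = 3/4 := by
        rw [div_pow, Real.sq_sqrt (by norm_num : (0:ℝ) ≤ 3)]; norm_num
      nlinarith
    nlinarith
  have hyne : y ≠ 0 := norm_pos_iff.mp ht0
  set x : EuclideanSpace ℝ (Fin (m+2)) := t⁻¹ • y with hxdef
  have hxs : ‖x‖ = 1 := norm_smul_inv_norm hyne
  have hfac : (t - s) * (t + s) = q := by nlinarith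
  have hcap : ‖x - EuclideanSpace.single (0 : Fin (m+2)) (1:ℝ)‖ ≤ η := by
    have hcoord : ∀ j : Fin (m+2),
        (x - EuclideanSpace.single (0 : Fin (m+2)) (1:ℝ)) j
          = t⁻¹ * y j - (if j = 0 then (1:ℝ) else 0) := by
      intro j
      rw [PiLp.sub_apply, hxdef, PiLp.smul_apply, smul_eq_mul, EuclideanSpace.single_apply]
    have hnorm : ‖x - EuclideanSpace.single (0 : Fin (m+2)) (1:ℝ)‖
        = √((t⁻¹*s - 1)^2 + t⁻¹^2 * q) := by
      rw [EuclideanSpace.norm_eq]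
      congr 1
      rw [Fin.sum_univ_succ]
      congr 1
      · rw [Real.norm_eq_abs, sq_abs, hcoord 0, if_pos rfl, ← hs]
      · rw [hqdef, Finset.mul_sum]
        refine Finset.sum_congr rfl fun i _ => ?_
        rw [Real.norm_eq_abs, sq_abs, hcoord i.succ, if_neg (Fin.succ_ne_zero i)]
        ring
    rw [hnorm]
    have h3 : t - s ≤ q := by nlinarith [hfac, hts, hs1, ht0]
    have key : (t⁻¹*s - 1)^2 + t⁻¹^2 * q ≤ η^2 := by
      have expand : ((t⁻¹*s - 1)^2 + t⁻¹^2 * q) * t^2 = (s - t)^2 + q := by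
        field_simp
      have key2 : (s - t)^2 + q ≤ η^2 * t^2 := by
        nlinarith [h3, hq, ht0, ht1, hty, hs1, hts, sq_nonneg η, sq_nonneg (t-s)]
      have h2 : ((t⁻¹*s - 1)^2 + t⁻¹^2 * q) * t^2 ≤ η^2 * t^2 := by
        rw [expand]; exact key2
      exact le_of_mul_le_mul_right h2 (by positivity)
    calc √((t⁻¹*s - 1)^2 + t⁻¹^2 * q) ≤ √(η^2) := Real.sqrt_le_sqrt key
      _ = η := Real.sqrt_sq hη0.le
  refine Set.mem_smul.mpr ⟨t, ⟨ht0, ht1⟩, x, ?_, smul_inv_smul₀ ht0.ne' y⟩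
  exact ⟨⟨x, mem_sphere_zero_iff_norm.mpr hxs⟩, hcap, rfl⟩

lemma real_ineq' (m : ℕ) (η : ℝ) (hη0 : 0 < η) :
    η^(m+1)/(2^(m+2)*π) * (√π^(m+2)/Gamma (((m:ℝ)+2)/2+1))
      ≤ (√3/2 - 1/2) * ((η/2)^(m+1) * (√π^(m+1)/Gamma (((m:ℝ)+1)/2+1))) := by
  have h := real_ineq m η hη0
  rwa [one_pow, one_mul] at h


end SphereCapAux

open SphereCapAux in
/-- **Lower bound on the uniform measure of a spherical cap.**
If `σ` is the rotation-invariant (uniform) probability measure on the unit sphere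
`S^{d-1} ⊂ ℝ^d`, `d ≥ 2`, `U ∈ S^{d-1}` and `η ∈ (0,1]`, then
`σ({u : ‖u - U‖ ≤ η}) ≥ η^(d-1) / (2^d π)`. -/
theorem sphere_cap_lower_bound
    (d : ℕ) (hd : 2 ≤ d)
    (σ : Measure (sphere (0 : EuclideanSpace ℝ (Fin d)) 1)) [IsProbabilityMeasure σ]
    (hinv : ∀ T : EuclideanSpace ℝ (Fin d) ≃ₗᵢ[ℝ] EuclideanSpace ℝ (Fin d),
      Measure.map (sphereMap T) σ = σ)
    (U : EuclideanSpace ℝ (Fin d)) (hU : U ∈ sphere (0 : EuclideanSpace ℝ (Fin d)) 1)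
    (η : ℝ) (hη : η ∈ Set.Ioc (0:ℝ) 1) :
    ENNReal.ofReal (η ^ (d - 1) / (2 ^ d * Real.pi))
      ≤ σ {u | ‖(u : EuclideanSpace ℝ (Fin d)) - U‖ ≤ η} := by
  obtain ⟨m, rfl⟩ : ∃ m, d = m + 2 := ⟨d - 2, by omega⟩
  obtain ⟨hη0, hη1⟩ := hη
  set ν := (volume : Measure (EuclideanSpace ℝ (Fin (m+2)))).toSphere with hνdef
  have hUnorm : ‖U‖ = 1 := mem_sphere_zero_iff_norm.mp hU
  set e0 : EuclideanSpace ℝ (Fin (m+2)) := EuclideanSpace.single (0 : Fin (m+2)) (1:ℝ)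
    with he0def
  have he0 : ‖e0‖ = 1 := by rw [he0def, EuclideanSpace.norm_single]; norm_num
  have fub := fubini_caps σ hinv U hUnorm η
  have hcapeq : ν (cap U η) = ν (cap e0 η) :=
    toSphere_cap_const U e0 (by rw [hUnorm, he0]) η
  have hfr : Module.finrank ℝ (EuclideanSpace ℝ (Fin (m+2))) = m+2 :=
    finrank_euclideanSpace_fin
  have huniv : ν Set.univ
      = ((m+2 : ℕ) : ENNReal) * volume (ball (0 : EuclideanSpace ℝ (Fin (m+2))) 1) := by
    rw [hνdef, Measure.toSphere_apply_univ, hfr]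
  have hcap_lb : ((m+2:ℕ) : ENNReal) * volume {y : EuclideanSpace ℝ (Fin (m+2)) |
        y 0 ∈ Set.Ioo (1/2:ℝ) (√3/2) ∧ ∑ i : Fin (m+1), (y i.succ)^2 < (η/2)^2}
      ≤ ν (cap e0 η) := by
    rw [hνdef, Measure.toSphere_apply' _ (measurableSet_cap e0 η), hfr]
    exact mul_le_mul_right (measure_mono (cylinder_subset m η hη0 hη1)) _
  have hvol : ENNReal.ofReal (η^(m+1)/(2^(m+2)*Real.pi))
        * volume (ball (0 : EuclideanSpace ℝ (Fin (m+2))) 1)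
      ≤ ENNReal.ofReal (√3/2 - 1/2)
        * volume (ball (0 : EuclideanSpace ℝ (Fin (m+1))) (η/2)) := by
    rw [EuclideanSpace.volume_ball, EuclideanSpace.volume_ball]
    simp only [Fintype.card_fin, ENNReal.ofReal_one, one_pow, one_mul]
    rw [← ENNReal.ofReal_pow (by positivity : (0:ℝ) ≤ η/2),
      ← ENNReal.ofReal_mul (by positivity), ← ENNReal.ofReal_mul (by positivity),
      ← ENNReal.ofReal_mul (by
        nlinarith [Real.sq_sqrt (show (0:ℝ) ≤ 3 by norm_num), Real.sqrt_nonneg 3] :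
        (0:ℝ) ≤ √3/2 - 1/2)]
    apply ENNReal.ofReal_le_ofReal
    have h := real_ineq' m η hη0
    push_cast
    convert h using 4
  have chain : ENNReal.ofReal (η^(m+1)/(2^(m+2)*Real.pi)) * ν Set.univ
      ≤ σ (cap U η) * ν Set.univ := by
    rw [fub, hcapeq, huniv]
    calc ENNReal.ofReal (η^(m+1)/(2^(m+2)*Real.pi))
          * (((m+2 : ℕ) : ENNReal) * volume (ball (0 : EuclideanSpace ℝ (Fin (m+2))) 1))
        = ((m+2 : ℕ) : ENNReal) * (ENNReal.ofReal (η^(m+1)/(2^(m+2)*Real.pi))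
            * volume (ball (0 : EuclideanSpace ℝ (Fin (m+2))) 1)) := by ring
      _ ≤ ((m+2:ℕ) : ENNReal) * (ENNReal.ofReal (√3/2 - 1/2)
            * volume (ball (0 : EuclideanSpace ℝ (Fin (m+1))) (η/2))) :=
          mul_le_mul_right hvol _
      _ = ((m+2:ℕ) : ENNReal) * volume {y : EuclideanSpace ℝ (Fin (m+2)) |
            y 0 ∈ Set.Ioo (1/2:ℝ) (√3/2) ∧ ∑ i : Fin (m+1), (y i.succ)^2 < (η/2)^2} := by
          rw [volume_cylinder m η hη0]
      _ ≤ ν (cap e0 η) := hcap_lb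
  have hν0 : ν Set.univ ≠ 0 := by
    rw [huniv]
    exact mul_ne_zero (Nat.cast_ne_zero.mpr (by omega))
      (measure_ball_pos volume 0 (by norm_num)).ne'
  have hνtop : ν Set.univ ≠ ⊤ := measure_ne_top ν _
  simpa [cap] using (ENNReal.mul_le_mul_iff_left hν0 hνtop).mp chain
end
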